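/- arXiv:2509.10070 — 4 statements merged into one kernel-verified Lean document; each statement's English description precedes it below -/
import Mathlib

section
/- Let G be a finite simple graph with n vertices, m edges, and c connected components. Then every graphic parity network for G has size at least m + n − c. -/
/-- Apply a CNOT gate `g = (control, target)` to a state `t : V → Finset V`:
the target wire receives the symmetric difference of the control and target terms,
all other wires are unchanged. -/
def applyGate {V : Type*} [DecidableEq V] (g : V × V) (t : V → Finset V) : V → Finset V :=
  fun w => if w = g.2 then symmDiff (t g.1) (t g.2) else t w

/-- Run a circuit (a list of CNOT gates) from the initial state `term v = {v}`. -/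
def runCircuit {V : Type*} [DecidableEq V] (C : List (V × V)) : V → Finset V :=
  C.foldl (fun t g => applyGate g t) (fun v => {v})

/-- `C` is a graphic parity network for the graph `G`:
every gate has distinct control and target, every edge `{u, v}` of `G` appears as the
term of some wire after some prefix of the circuit, and the final state is the initial
state. Its size is `C.length`. -/
def IsGPN {V : Type*} [DecidableEq V] (G : SimpleGraph V) (C : List (V × V)) : Prop :=
  (∀ g ∈ C, g.1 ≠ g.2) ∧
  (∀ u v : V, G.Adj u v → ∃ (k : ℕ) (w : V), runCircuit (C.take k) w = {u, v}) ∧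
  (∀ v : V, runCircuit C v = {v})

/-!
Every edge `{u, v}` is the output (the new target term) of the last gate that wrote it on its
wire, so at least `m` gates output a pair. Call a gate bridging if no earlier gate path connects
its control to its target. A term only involves wires connected to its own, and terms are never
empty because the state matrix stays invertible over `ZMod 2`; so a bridging gate adds two
disjoint nonempty terms. Each bridging gate merges two classes of connected wires, and the wires
of an edge of `G` end up connected, so at least `n - c` gates are bridging.

Let `A` (resp. `D`) be the gates whose output (resp. input on the target) has at least two
elements. Pair-producing and bridging gates lie in `A`, and those that are both turn a singleton
into a pair, so lie in `A \ D`. The number of wires carrying terms of size at least two is zero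
at both ends of the circuit, hence `#A = #D`, and the two kinds of gates number at most
`#A + #(A \ D) = #(A ∪ D)`, which is at most the size of the circuit.
-/

section

open Finset

variable {V : Type*}

lemma Finset.card_add_card_le_card_union_of_subset {ι : Type*} [DecidableEq ι]
    {P B A D : Finset ι} (hunion : P ∪ B ⊆ A) (hinter : P ∩ B ⊆ A \ D) (hAD : #A = #D) :
    #P + #B ≤ #(A ∪ D) :=
  calc #P + #B = #(P ∪ B) + #(P ∩ B) := (card_union_add_card_inter P B).symm
    _ ≤ #A + #(A \ D) := add_le_add (card_le_card hunion) (card_le_card hinter)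
    _ = #(A \ D) + #D := by rw [hAD, add_comm]
    _ = #(A ∪ D) := card_sdiff_add_card A D

lemma Fin.sum_univ_sub {G : Type*} [AddCommGroup G] (f : ℕ → G) (n : ℕ) :
    ∑ k : Fin n, (f (k + 1) - f k) = f n - f 0 :=
  (Fin.sum_univ_eq_sum_range (fun i => f (i + 1) - f i) n).trans (sum_range_sub f n)

namespace Setoid

def glue (s : Setoid V) (i j : V) : Setoid V where
  r a b := s a b ∨ (s a i ∧ s j b) ∨ (s a j ∧ s i b)
  iseqv.refl a := Or.inl (s.refl' a)
  iseqv.symm := by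
    rintro a b (h | ⟨h₁, h₂⟩ | ⟨h₁, h₂⟩)
    exacts [Or.inl (s.symm' h), Or.inr (Or.inr ⟨s.symm' h₂, s.symm' h₁⟩),
      Or.inr (Or.inl ⟨s.symm' h₂, s.symm' h₁⟩)]
  iseqv.trans := by
    rintro a b c (h | h | h) (h' | h' | h') <;> grind [s.trans', s.symm']

variable (s : Setoid V) (i j : V)

lemma le_glue : s ≤ s.glue i j := fun _ _ h => Or.inl h

lemma glue_eq_of_rel (h : s i j) : s.glue i j = s :=
  le_antisymm (fun a b hab => by
    rcases hab with hab | ⟨h₁, h₂⟩ | ⟨h₁, h₂⟩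
    exacts [hab, s.trans' h₁ (s.trans' h h₂), s.trans' h₁ (s.trans' (s.symm' h) h₂)])
    (le_glue s i j)

/-- Only the class of `i` can be merged into another one. -/
lemma card_quotient_le_card_quotient_glue_add_one [Finite V] :
    Nat.card (Quotient s) ≤ Nat.card (Quotient (s.glue i j)) + 1 := by
  classical
  let f : Quotient s → Option (Quotient (s.glue i j)) := fun x =>
    if x = ⟦i⟧ then none else some (Quotient.map id (le_glue s i j) x)
  have hf : f.Injective := by
    intro x y hab
    obtain ⟨a, rfl⟩ := Quotient.mk_surjective x
    obtain ⟨b, rfl⟩ := Quotient.mk_surjective y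
    have key : ∀ {x : V}, ¬ s x i → f ⟦x⟧ = some ⟦x⟧ := fun hx =>
      if_neg (hx ∘ Quotient.exact)
    by_cases ha : s a i <;> by_cases hb : s b i
    · exact Quotient.sound (s.trans' ha (s.symm' hb))
    · simp [key hb, f, Quotient.sound ha] at hab
    · simp [key ha, f, Quotient.sound hb] at hab
    · rw [key ha, key hb, Option.some_inj, Quotient.eq] at hab
      rcases hab with hab | ⟨h₁, -⟩ | ⟨-, h₂⟩
      exacts [Quotient.sound hab, (ha h₁).elim, (hb (s.symm' h₂)).elim]
  rw [← Finite.card_option]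
  exact Nat.card_le_card_of_injective f hf

end Setoid

def gateSetoid (l : List (V × V)) : Setoid V := l.foldl (fun s g => s.glue g.1 g.2) ⊥

lemma gateSetoid_append_singleton (l : List (V × V)) (g : V × V) :
    gateSetoid (l ++ [g]) = (gateSetoid l).glue g.1 g.2 := by
  simp [gateSetoid]

lemma gateSetoid_take_succ (C : List (V × V)) (k : Fin C.length) :
    gateSetoid (C.take (k + 1)) = (gateSetoid (C.take k)).glue C[k].1 C[k].2 := by
  rw [List.take_add_one, List.getElem?_eq_getElem k.isLt]
  exact gateSetoid_append_singleton _ _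

lemma gateSetoid_le_append (l l' : List (V × V)) : gateSetoid l ≤ gateSetoid (l ++ l') := by
  induction l' using List.reverseRecOn with
  | nil => simp
  | append_singleton l' g ih =>
    rw [← List.append_assoc, gateSetoid_append_singleton]
    exact ih.trans (Setoid.le_glue _ _ _)

def IsBridging (C : List (V × V)) (k : Fin C.length) : Prop :=
  ¬ gateSetoid (C.take k) C[k].1 C[k].2

open scoped Classical in
lemma card_le_card_isBridging_add_card_quotient [Finite V] (C : List (V × V)) :
    Nat.card V ≤ #{k | IsBridging C k} + Nat.card (Quotient (gateSetoid C)) := by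
  let numClasses (t : ℕ) : ℤ := Nat.card (Quotient (gateSetoid (C.take t)))
  have step (k : Fin C.length) :
      -(if IsBridging C k then 1 else 0) ≤ numClasses (k + 1) - numClasses k := by
    simp only [numClasses, gateSetoid_take_succ]
    split_ifs with hk
    · have := (gateSetoid (C.take k)).card_quotient_le_card_quotient_glue_add_one C[k].1 C[k].2
      omega
    · rw [IsBridging, not_not] at hk
      rw [Setoid.glue_eq_of_rel _ _ _ hk, neg_zero, sub_self]
  have total := sum_le_sum fun k (_ : k ∈ univ) => step k
  rw [Fin.sum_univ_sub, sum_neg_distrib, ← natCast_card_filter] at total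
  simp only [numClasses, List.take_zero, List.take_length] at total
  have hbot : Nat.card (Quotient (gateSetoid ([] : List (V × V)))) = Nat.card V :=
    Nat.card_congr Setoid.quotientBotEquiv
  omega

section Circuit

variable [DecidableEq V]

lemma applyGate_eq_update (g : V × V) (t : V → Finset V) :
    applyGate g t = Function.update t g.2 (symmDiff (t g.1) (t g.2)) := by
  ext1 w
  by_cases hw : w = g.2
  · subst hw; simp [applyGate]
  · simp [applyGate, hw]

lemma runCircuit_append_singleton (l : List (V × V)) (g : V × V) :
    runCircuit (l ++ [g]) = applyGate g (runCircuit l) := by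
  simp [runCircuit]

lemma runCircuit_take_succ (C : List (V × V)) (k : Fin C.length) :
    runCircuit (C.take (k + 1)) = applyGate C[k] (runCircuit (C.take k)) := by
  rw [List.take_add_one, List.getElem?_eq_getElem k.isLt]
  exact runCircuit_append_singleton _ _

lemma runCircuit_subset_class (l : List (V × V)) (w : V) :
    ∀ x ∈ runCircuit l w, gateSetoid l w x := by
  induction l using List.reverseRecOn generalizing w with
  | nil => simp [runCircuit]
  | append_singleton l g ih =>
    intro x hx
    rw [runCircuit_append_singleton, applyGate_eq_update] at hx
    rw [gateSetoid_append_singleton]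
    by_cases hw : w = g.2
    · subst hw
      rw [Function.update_self, mem_symmDiff] at hx
      rcases hx with ⟨hx, -⟩ | ⟨hx, -⟩
      exacts [Or.inr (Or.inr ⟨(gateSetoid l).refl' _, ih _ x hx⟩), Or.inl (ih _ x hx)]
    · rw [Function.update_of_ne hw] at hx
      exact Or.inl (ih w x hx)

section Gates

variable (C : List (V × V))

def gateInput (k : Fin C.length) : Finset V := runCircuit (C.take k) C[k].2

def gateOutput (k : Fin C.length) : Finset V := runCircuit (C.take (k + 1)) C[k].2

lemma gateOutput_eq (k : Fin C.length) :
    gateOutput C k = symmDiff (runCircuit (C.take k) C[k].1) (gateInput C k) := by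
  rw [gateOutput, runCircuit_take_succ, applyGate, if_pos rfl, gateInput]

lemma card_gateOutput_of_isBridging {k : Fin C.length} (hk : IsBridging C k) :
    #(gateOutput C k) = #(runCircuit (C.take k) C[k].1) + #(gateInput C k) := by
  have hdisj : Disjoint (runCircuit (C.take k) C[k].1) (gateInput C k) :=
    disjoint_left.2 fun x h₁ h₂ => hk <|
      (gateSetoid _).trans' (runCircuit_subset_class _ _ x h₁)
        ((gateSetoid _).symm' (runCircuit_subset_class _ _ x h₂))
  rw [gateOutput_eq, hdisj.symmDiff_eq_sup, sup_eq_union, card_union_of_disjoint hdisj]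

/-- A term other than the initial one was written by the last gate targeting its wire. -/
lemma exists_gateOutput_eq (t : ℕ) (w : V) (hw : runCircuit (C.take t) w ≠ {w}) :
    ∃ k : Fin C.length, gateOutput C k = runCircuit (C.take t) w := by
  induction t with
  | zero => exact absurd rfl hw
  | succ t ih =>
    by_cases ht : t < C.length
    · by_cases htw : w = C[t].2
      · exact ⟨⟨t, ht⟩, by rw [htw]; rfl⟩
      · have hstep : runCircuit (C.take (t + 1)) w = runCircuit (C.take t) w := by
          rw [runCircuit_take_succ C ⟨t, ht⟩, applyGate_eq_update]
          exact Function.update_of_ne htw _ _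
        rw [hstep] at hw ⊢
        exact ih hw
    · have hstep : C.take (t + 1) = C.take t := by
        rw [List.take_of_length_le (by omega), List.take_of_length_le (by omega)]
      rw [hstep] at hw ⊢
      exact ih hw

lemma card_edgeSet_le_card_pair_gateOutput (G : SimpleGraph V)
    (hG : ∀ u v, G.Adj u v → ∃ (t : ℕ) (w : V), runCircuit (C.take t) w = {u, v}) :
    Nat.card G.edgeSet ≤ #{k | #(gateOutput C k) = 2} := by
  have hprod (e : G.edgeSet) : ∃ k : Fin C.length, gateOutput C k = (e : Sym2 V).toFinset := by
    obtain ⟨e, he⟩ := e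
    induction e using Sym2.ind with
    | _ u v =>
      obtain ⟨t, w, hw⟩ := hG u v he
      have hne : runCircuit (C.take t) w ≠ {w} := fun h => by
        have := congrArg card (hw.symm.trans h)
        rw [card_pair (G.ne_of_adj he), card_singleton] at this
        omega
      obtain ⟨k, hk⟩ := exists_gateOutput_eq C t w hne
      exact ⟨k, by rw [hk, hw, Sym2.toFinset_mk_eq]⟩
  choose f hf using hprod
  have hinj : f.Injective := fun e₁ e₂ h => Subtype.ext <| Sym2.ext fun x => by
    rw [← Sym2.mem_toFinset, ← Sym2.mem_toFinset, ← hf, ← hf, h]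
  have hmem (e : G.edgeSet) : f e ∈ ({k | #(gateOutput C k) = 2} : Finset _) := by
    rw [mem_filter, hf, Sym2.card_toFinset_of_not_isDiag _ (G.not_isDiag_of_mem_edgeSet e.2)]
    exact ⟨mem_univ _, rfl⟩
  rw [← Nat.card_eq_finsetCard]
  exact Nat.card_le_card_of_injective (fun e => ⟨f e, hmem e⟩) fun e₁ e₂ h =>
    hinj (congrArg Subtype.val h)

end Gates

variable [Fintype V]

noncomputable def stateMatrix (t : V → Finset V) : Matrix V V (ZMod 2) :=
  Matrix.of fun w v => if v ∈ t w then 1 else 0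

lemma stateMatrix_applyGate (g : V × V) (t : V → Finset V) :
    stateMatrix (applyGate g t) = Matrix.transvection g.2 g.1 1 * stateMatrix t := by
  ext w v
  by_cases hw : w = g.2
  · subst hw
    by_cases h₁ : v ∈ t g.1 <;> by_cases h₂ : v ∈ t g.2 <;>
      simp [stateMatrix, applyGate, Matrix.transvection, Matrix.add_mul, mem_symmDiff, h₁, h₂]
    decide
  · simp [stateMatrix, applyGate, Matrix.transvection, Matrix.add_mul, hw]

lemma det_stateMatrix_runCircuit (l : List (V × V)) (hl : ∀ g ∈ l, g.1 ≠ g.2) :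
    (stateMatrix (runCircuit l)).det = 1 := by
  induction l using List.reverseRecOn with
  | nil =>
    have : stateMatrix (runCircuit ([] : List (V × V))) = 1 := by
      ext w v
      simp [stateMatrix, runCircuit, Matrix.one_apply, eq_comm]
    rw [this, Matrix.det_one]
  | append_singleton l g ih =>
    rw [runCircuit_append_singleton, stateMatrix_applyGate, Matrix.det_mul,
      Matrix.det_transvection_of_ne _ _ (hl g (by simp)).symm, one_mul]
    exact ih fun g' hg' => hl g' (by simp [hg'])

lemma runCircuit_nonempty (l : List (V × V)) (hl : ∀ g ∈ l, g.1 ≠ g.2) (w : V) :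
    (runCircuit l w).Nonempty := by
  rw [nonempty_iff_ne_empty]
  intro hw
  have := det_stateMatrix_runCircuit l hl
  rw [Matrix.det_eq_zero_of_row_eq_zero w (by simp [stateMatrix, hw])] at this
  exact zero_ne_one this

def numHeavy (t : V → Finset V) : ℕ := #{w | 2 ≤ #(t w)}

lemma numHeavy_applyGate (g : V × V) (t : V → Finset V) :
    (numHeavy (applyGate g t) : ℤ) - numHeavy t =
      (if 2 ≤ #(applyGate g t g.2) then 1 else 0) - (if 2 ≤ #(t g.2) then 1 else 0) := by
  simp only [numHeavy, natCast_card_filter, applyGate_eq_update, Function.update_self]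
  rw [← add_sum_erase _ _ (mem_univ g.2), ← add_sum_erase _ _ (mem_univ g.2),
    Function.update_self,
    sum_congr rfl fun w hw => by rw [Function.update_of_ne (ne_of_mem_erase hw)]]
  ring

variable (C : List (V × V))

lemma card_heavy_gateOutput_eq (hfin : ∀ v, runCircuit C v = {v}) :
    #{k | 2 ≤ #(gateOutput C k)} = #{k | 2 ≤ #(gateInput C k)} := by
  let heavyWires (t : ℕ) : ℤ := numHeavy (runCircuit (C.take t))
  have step (k : Fin C.length) : heavyWires (k + 1) - heavyWires k =
      (if 2 ≤ #(gateOutput C k) then 1 else 0) - (if 2 ≤ #(gateInput C k) then 1 else 0) := by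
    simp only [heavyWires]
    rw [gateOutput, gateInput, runCircuit_take_succ, numHeavy_applyGate]
  have total : ∑ k : Fin C.length, (heavyWires (k + 1) - heavyWires k) = 0 := by
    rw [Fin.sum_univ_sub, sub_eq_zero]
    simp only [heavyWires, List.take_length, List.take_zero, funext hfin]
    rfl
  simp only [step, sum_sub_distrib, ← natCast_card_filter] at total
  omega

lemma card_quotient_gateSetoid_le (G : SimpleGraph V)
    (hG : ∀ u v, G.Adj u v → ∃ (t : ℕ) (w : V), runCircuit (C.take t) w = {u, v}) :
    Nat.card (Quotient (gateSetoid C)) ≤ Nat.card G.ConnectedComponent := by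
  have hadj {u v : V} (huv : G.Adj u v) : gateSetoid C u v := by
    obtain ⟨t, w, hw⟩ := hG u v huv
    have hle := gateSetoid_le_append (C.take t) (C.drop t)
    rw [List.take_append_drop] at hle
    have hu := runCircuit_subset_class (C.take t) w u (by simp [hw])
    have hv := runCircuit_subset_class (C.take t) w v (by simp [hw])
    exact hle ((gateSetoid _).trans' ((gateSetoid _).symm' hu) hv)
  have hreach {u v : V} (h : G.Reachable u v) : gateSetoid C u v := by
    obtain ⟨p⟩ := h
    induction p with
    | nil => exact (gateSetoid C).refl' _
    | cons h _ ih => exact (gateSetoid C).trans' (hadj h) ih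
  exact Nat.card_le_card_of_surjective
    (Quot.lift (fun v => (⟦v⟧ : Quotient (gateSetoid C))) fun _ _ h =>
      Quotient.sound (hreach h))
    (Quotient.ind fun v => ⟨G.connectedComponentMk v, rfl⟩)

section Bridging

variable {C} (hC : ∀ g ∈ C, g.1 ≠ g.2)
include hC

lemma runCircuit_take_nonempty (t : ℕ) (w : V) : (runCircuit (C.take t) w).Nonempty :=
  runCircuit_nonempty _ (fun g hg => hC g (List.mem_of_mem_take hg)) w

lemma card_gateInput_pos (k : Fin C.length) : 0 < #(gateInput C k) :=
  (runCircuit_take_nonempty hC k _).card_pos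

lemma card_gateInput_lt_card_gateOutput_of_isBridging {k : Fin C.length} (hk : IsBridging C k) :
    #(gateInput C k) < #(gateOutput C k) := by
  have := (runCircuit_take_nonempty hC k C[k].1).card_pos
  rw [card_gateOutput_of_isBridging C hk]
  omega

open scoped Classical in
lemma card_pair_gateOutput_add_card_isBridging_le (hfin : ∀ v, runCircuit C v = {v}) :
    #{k | #(gateOutput C k) = 2} + #{k | IsBridging C k} ≤ C.length :=
  calc _ ≤ #(univ.filter (fun k => 2 ≤ #(gateOutput C k)) ∪
          univ.filter (fun k => 2 ≤ #(gateInput C k))) := by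
        refine card_add_card_le_card_union_of_subset ?_ ?_ (card_heavy_gateOutput_eq C hfin)
        · intro k
          simp only [mem_union, mem_filter, mem_univ, true_and]
          rintro (hk | hk)
          · exact hk.ge
          · have := card_gateInput_pos hC k
            have := card_gateInput_lt_card_gateOutput_of_isBridging hC hk
            omega
        · intro k
          simp only [mem_inter, mem_sdiff, mem_filter, mem_univ, true_and]
          rintro ⟨h2, hk⟩
          have := card_gateInput_pos hC k
          have := card_gateInput_lt_card_gateOutput_of_isBridging hC hk
          exact ⟨h2.ge, by omega⟩
    _ ≤ C.length := (card_le_univ _).trans_eq (Fintype.card_fin _)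

end Bridging

end Circuit

end

/-- Every graphic parity network for a graph with `n` vertices, `m` edges and `c`
connected components has size at least `m + n - c`. -/
theorem stmt0 {V : Type*} [Fintype V] [DecidableEq V] (G : SimpleGraph V)
    (C : List (V × V)) (h : IsGPN G C) :
    Nat.card G.edgeSet + Fintype.card V - Nat.card G.ConnectedComponent ≤ C.length := by
  obtain ⟨hC, hG, hfin⟩ := h
  have hedges := card_edgeSet_le_card_pair_gateOutput C G hG
  have hvertices := card_le_card_isBridging_add_card_quotient C
  rw [Nat.card_eq_fintype_card] at hvertices
  have hcomponents := card_quotient_gateSetoid_le C G hG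
  have hgates := card_pair_gateOutput_add_card_isBridging_le hC hfin
  omega
end

section
/- There exists a real constant C > 0 such that every finite simple graph G on n ≥ 2 vertices with m edges admits a graphic parity network of size at most m + C · n^(3/2) · √(ln n). -/
/-!
Split the vertices into blocks of `b ≈ √n` consecutive vertices and treat one block at a time.
A pair `{x, y}` of the current block is *presented* by the gate `(x, y)`, which turns wire `y`
into `{x, y}`, and withdrawn by repeating that gate; presenting all pairs costs `2b` gates per
vertex, and produces every edge inside the block. Each vertex `u` of an earlier block walks
through its neighbours in the current block: the gate `(y, u)` takes wire `u` from `{u}` to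
`{u, y}`, or from `{u, x}` to `{u, y}` while `{x, y}` is presented, so every edge between blocks
costs a single gate; one more gate per walker and block restores `{u}`. In total
`m + 2bn + n (n / b + 1) ≤ m + 6 n √n` gates suffice.
-/

namespace GraphicParityNetwork

section Run

variable {V : Type*} [DecidableEq V]

def runFrom (t : V → Finset V) (C : List (V × V)) : V → Finset V :=
  C.foldl (fun t g => applyGate g t) t

@[simp] lemma runFrom_nil (t : V → Finset V) : runFrom t [] = t := rfl

@[simp] lemma runFrom_cons (t : V → Finset V) (g : V × V) (C : List (V × V)) :
    runFrom t (g :: C) = runFrom (applyGate g t) C := rfl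

lemma runFrom_append (t : V → Finset V) (A B : List (V × V)) :
    runFrom t (A ++ B) = runFrom (runFrom t A) B :=
  List.foldl_append

lemma runFrom_fan (t : V → Finset V) (c : V → V) {us : List V} (hus : us.Nodup)
    (hc : ∀ u ∈ us, c u ∉ us) (w : V) :
    runFrom t (us.map fun u => (c u, u)) w =
      if w ∈ us then symmDiff (t (c w)) (t w) else t w := by
  induction us generalizing t with
  | nil => simp
  | cons u us ih =>
    obtain ⟨hu, hus⟩ := List.nodup_cons.1 hus
    rw [List.map_cons, runFrom_cons, ih _ hus fun v hv hcv => hc v (by simp [hv]) (by simp [hcv])]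
    by_cases hw : w ∈ us
    · have hwu : w ≠ u := by rintro rfl; exact hu hw
      have hcw : c w ≠ u := fun h => hc w (by simp [hw]) (by simp [h])
      simp [applyGate, hw, hwu, hcw]
    · by_cases hwu : w = u
      · subst hwu; simp [applyGate, hw]
      · simp [applyGate, hw, hwu]

def Produces (t : V → Finset V) (C : List (V × V)) (S : Finset V) : Prop :=
  ∃ P, P <+: C ∧ ∃ w, runFrom t P w = S

lemma Produces.append_right {t : V → Finset V} {A : List (V × V)} {S : Finset V}
    (h : Produces t A S) (B : List (V × V)) : Produces t (A ++ B) S := by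
  obtain ⟨P, hP, w, hw⟩ := h
  exact ⟨P, hP.trans (List.prefix_append A B), w, hw⟩

lemma Produces.append_left {t : V → Finset V} {B : List (V × V)} {S : Finset V}
    (A : List (V × V)) (h : Produces (runFrom t A) B S) : Produces t (A ++ B) S := by
  obtain ⟨P, hP, w, hw⟩ := h
  exact ⟨A ++ P, (List.prefix_append_right_inj A).2 hP, w, by rw [runFrom_append, hw]⟩

lemma produces_of_runFrom {t : V → Finset V} {C : List (V × V)} {w : V} :
    Produces t C (runFrom t C w) :=
  ⟨C, List.prefix_refl C, w, rfl⟩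

/-- Wire `w` carries `{w, p w}`: the walker on wire `w` is parked at `p w`, or idle if
`p w = w`. -/
def pairState (p : V → V) : V → Finset V := fun w => {w, p w}

lemma pairState_id : pairState (id : V → V) = fun v => {v} :=
  funext fun v => Finset.pair_eq_singleton v

lemma Produces.exists_runCircuit_take {C : List (V × V)} {S : Finset V}
    (h : Produces (pairState id) C S) : ∃ (k : ℕ) (w : V), runCircuit (C.take k) w = S := by
  obtain ⟨P, hP, w, hw⟩ := h
  exact ⟨P.length, w, by rw [← List.prefix_iff_eq_take.1 hP, ← hw, pairState_id]; rfl⟩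

lemma runFrom_enter (p : V → V) (y : V) {W : List V} (hW : W.Nodup) (hy : p y = y)
    (hWp : ∀ u ∈ W, p u = u ∧ u ≠ y) :
    runFrom (pairState p) (W.map fun u => (y, u)) =
      pairState fun u => if u ∈ W then y else p u := by
  have hyW : y ∉ W := fun h => (hWp y h).2 rfl
  funext w
  rw [runFrom_fan _ (fun _ => y) hW fun _ _ => hyW]
  by_cases hw : w ∈ W
  · simp only [pairState, hw, if_true, (hWp w hw).1, hy, Finset.pair_eq_singleton]
    ext z; simp only [Finset.mem_symmDiff, Finset.mem_insert, Finset.mem_singleton]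
    grind
  · simp [pairState, hw]

lemma runFrom_present (p : V → V) {x y : V} (hxy : x ≠ y) (hx : p x = x) (hy : p y = y)
    {W : List V} (hW : W.Nodup) (hWp : ∀ u ∈ W, p u = x ∧ u ≠ x ∧ u ≠ y) :
    runFrom (pairState p) ((x, y) :: W.map (fun u => (y, u)) ++ [(x, y)]) =
      pairState fun u => if u ∈ W then y else p u := by
  have hxW : x ∉ W := fun h => (hWp x h).2.1 rfl
  have hyW : y ∉ W := fun h => (hWp y h).2.2 rfl
  rw [List.cons_append, runFrom_cons, runFrom_append]
  funext w
  simp only [runFrom_cons, runFrom_nil, applyGate]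
  simp only [runFrom_fan _ (fun _ => y) hW fun _ _ => hyW, hxW, hyW, if_false]
  simp only [applyGate, if_true, pairState, hx, hy, Finset.pair_eq_singleton]
  by_cases hwy : w = y
  · subst hwy
    simp only [if_true, hyW, if_false]
    ext z; simp only [Finset.mem_symmDiff, Finset.mem_insert, Finset.mem_singleton]
    grind
  · by_cases hw : w ∈ W
    · simp only [hwy, hw, if_true, if_false, (hWp w hw).1]
      ext z; simp only [Finset.mem_symmDiff, Finset.mem_insert, Finset.mem_singleton]
      grind
    · simp [hwy, hw]

lemma runFrom_exit (p : V → V) {W : List V} (hW : W.Nodup)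
    (hWp : ∀ u ∈ W, p u ≠ u ∧ p (p u) = p u) :
    runFrom (pairState p) (W.map fun u => (p u, u)) =
      pairState fun u => if u ∈ W then u else p u := by
  have hpW : ∀ u ∈ W, p u ∉ W := fun u hu h => (hWp _ h).1 (hWp u hu).2
  funext w
  rw [runFrom_fan _ p hW hpW]
  by_cases hw : w ∈ W
  · simp only [pairState, hw, if_true, (hWp w hw).2, Finset.pair_eq_singleton]
    ext z; simp only [Finset.mem_symmDiff, Finset.mem_insert, Finset.mem_singleton]
    grind
  · simp [pairState, hw]

end Run

section Blocks

variable {V : Type*} [Fintype V] (β : V → ℕ)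

noncomputable def block (j : ℕ) : List V := (Finset.univ.filter fun v => β v = j).toList

variable {β}

@[simp] lemma mem_block {j : ℕ} {v : V} : v ∈ block β j ↔ β v = j := by simp [block]

lemma block_nodup (j : ℕ) : (block β j).Nodup := Finset.nodup_toList _

end Blocks

def earlierNeighborFinset {V : Type*} [Fintype V] (G : SimpleGraph V) [DecidableRel G.Adj]
    (β : V → ℕ) (y : V) : Finset V :=
  Finset.univ.filter fun u => G.Adj u y ∧ β u < β y

section Parking

variable {V : Type*} (G : SimpleGraph V) [DecidableRel G.Adj] (β : V → ℕ)

def IsParkedIn (j : ℕ) (p : V → V) : Prop := ∀ u, p u ≠ u → β (p u) = j ∧ β u < j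

def advance (p : V → V) (y : V) : V → V := fun u => if G.Adj u y ∧ β u < β y then y else p u

def enter [DecidableEq V] (p : V → V) (y : V) : V → V :=
  fun u => if G.Adj u y ∧ β u < β y ∧ p u = u then y else p u

variable {G β}

lemma isParkedIn_id (j : ℕ) : IsParkedIn β j (id : V → V) := fun _ h => absurd rfl h

lemma IsParkedIn.eq_self {j : ℕ} {p : V → V} (hp : IsParkedIn β j p) {v : V} (hv : β v = j) :
    p v = v := by
  by_contra h
  exact (hp v h).2.ne hv

lemma IsParkedIn.advance {p : V → V} {y : V} (hp : IsParkedIn β (β y) p) :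
    IsParkedIn β (β y) (advance G β p y) := by
  intro u hu
  unfold GraphicParityNetwork.advance at hu ⊢
  split_ifs at hu ⊢ with h
  · exact ⟨rfl, h.2⟩
  · exact hp u hu

lemma enter_of_block [DecidableEq V] {p : V → V} {y v : V} (hp : IsParkedIn β (β y) p)
    (hv : β v = β y) :
    enter G β p y v = v := by
  simp [enter, hv, hp.eq_self hv]

lemma enter_of_parked [DecidableEq V] {p : V → V} {y u : V} (hu : β u < β y)
    (hpu : β (p u) = β y) :
    enter G β p y u = p u := by
  have : p u ≠ u := by rintro h; rw [h] at hpu; omega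
  simp [enter, this]

end Parking

noncomputable section Construction

variable {V : Type*} [DecidableEq V] [Fintype V] (G : SimpleGraph V) [DecidableRel G.Adj]
  (β : V → ℕ)

def entrants (p : V → V) (y : V) : List V :=
  Finset.univ.toList.filter fun u => G.Adj u y ∧ β u < β y ∧ p u = u

def movers (p : V → V) (x y : V) : List V :=
  Finset.univ.toList.filter fun u => G.Adj u y ∧ β u < β y ∧ p u = x

def presentation (p : V → V) (y x : V) : List (V × V) :=
  (x, y) :: (movers G β p x y).map (fun u => (y, u)) ++ [(x, y)]

/-- Every `x` of the block is presented together with `y`, so each walker reaches `y` wherever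
it is parked: the stages of a block may run in any order. -/
def stage (p : V → V) (y : V) : List (V × V) :=
  (entrants G β p y).map (fun u => (y, u)) ++
    ((block β (β y)).filter (· ≠ y)).flatMap (presentation G β p y)

def exits (p : V → V) : List (V × V) :=
  (Finset.univ.toList.filter fun u => p u ≠ u).map fun u => (p u, u)

def stages : (V → V) → List V → List (V × V)
  | p, [] => exits p
  | p, y :: ys => stage G β p y ++ stages (advance G β p y) ys

def circuit (k : ℕ) : List (V × V) := (List.range k).flatMap fun j => stages G β id (block β j)

variable {G β}

@[simp] lemma mem_entrants {p : V → V} {y u : V} :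
    u ∈ entrants G β p y ↔ G.Adj u y ∧ β u < β y ∧ p u = u := by simp [entrants]

@[simp] lemma mem_movers {p : V → V} {x y u : V} :
    u ∈ movers G β p x y ↔ G.Adj u y ∧ β u < β y ∧ p u = x := by simp [movers]

lemma entrants_nodup (p : V → V) (y : V) : (entrants G β p y).Nodup :=
  (Finset.nodup_toList _).filter _

lemma movers_nodup (p : V → V) (x y : V) : (movers G β p x y).Nodup :=
  (Finset.nodup_toList _).filter _

lemma runFrom_entrants {p : V → V} {y : V} (hp : IsParkedIn β (β y) p) :
    runFrom (pairState p) ((entrants G β p y).map fun u => (y, u)) =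
      pairState (enter G β p y) := by
  rw [runFrom_enter p y (entrants_nodup p y) (hp.eq_self rfl)]
  · simp only [mem_entrants]; rfl
  · intro u hu
    obtain ⟨-, hlt, hpu⟩ := mem_entrants.1 hu
    exact ⟨hpu, by rintro rfl; omega⟩

lemma runFrom_presentations {p q : V → V} {y : V} {xs : List V} (hxs : xs.Nodup)
    (hxsy : ∀ x ∈ xs, β x = β y ∧ x ≠ y) (hq : ∀ v, β v = β y → q v = v)
    (hqp : ∀ u, G.Adj u y → β u < β y → p u ∈ xs → q u = p u) :
    runFrom (pairState q) (xs.flatMap (presentation G β p y)) =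
      pairState fun u => if G.Adj u y ∧ β u < β y ∧ p u ∈ xs then y else q u := by
  induction xs generalizing q with
  | nil => simp
  | cons x xs ih =>
    obtain ⟨hx, hxs⟩ := List.nodup_cons.1 hxs
    obtain ⟨hxβ, hxy⟩ := hxsy x (by simp)
    rw [List.flatMap_cons, runFrom_append, presentation,
      runFrom_present q hxy (hq x hxβ) (hq y rfl) (movers_nodup p x y) ?movers, ih hxs]
    case movers =>
      intro u hu
      obtain ⟨hadj, hlt, hpu⟩ := mem_movers.1 hu
      refine ⟨(hqp u hadj hlt (by simp [hpu])).trans hpu, ?_, ?_⟩ <;>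
        rintro rfl <;> omega
    · congr 1; funext u
      by_cases hu : G.Adj u y ∧ β u < β y
      · by_cases hpx : p u = x <;> simp [hu, hpx]
      · simp only [mem_movers]
        rw [if_neg (by tauto), if_neg (by tauto), if_neg (by tauto)]
    · exact fun x' hx' => hxsy x' (by simp [hx'])
    · intro v hv
      have : v ∉ movers G β p x y := fun h => (mem_movers.1 h).2.1.ne hv
      simp [this, hq v hv]
    · intro u hadj hlt hpu
      have : p u ≠ x := fun h => hx (h ▸ hpu)
      simp [hadj, hlt, this, hqp u hadj hlt (by simp [hpu])]

lemma runFrom_stage {p : V → V} {y : V} (hp : IsParkedIn β (β y) p) :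
    runFrom (pairState p) (stage G β p y) = pairState (advance G β p y) := by
  rw [stage, runFrom_append, runFrom_entrants hp,
    runFrom_presentations ((block_nodup _).filter _) (fun x hx => by simpa using hx)
      (fun v hv => enter_of_block hp hv)
      (fun u _ hlt hpu => enter_of_parked hlt (by simpa using (List.mem_filter.1 hpu).1))]
  congr 1; funext u
  unfold enter GraphicParityNetwork.advance
  by_cases hu : G.Adj u y ∧ β u < β y
  · have : p u = u ∨ p u = y ∨ β (p u) = β y ∧ p u ≠ y := by
      by_cases h : p u = u
      · exact Or.inl h
      · have := (hp u h).1; tauto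
    rcases this with h | h | h <;> simp [hu, h]
  · rw [if_neg (by tauto), if_neg (by tauto), if_neg hu]

lemma runFrom_exits {j : ℕ} {p : V → V} (hp : IsParkedIn β j p) :
    runFrom (pairState p) (exits p) = pairState id := by
  rw [exits, runFrom_exit p ((Finset.nodup_toList _).filter _)]
  · congr 1; funext u; by_cases h : p u = u <;> simp [h]
  · intro u hu
    have hu : p u ≠ u := by simpa using hu
    exact ⟨hu, hp.eq_self (hp u hu).1⟩

lemma runFrom_stages {j : ℕ} {ys : List V} (hys : ∀ y ∈ ys, β y = j) {p : V → V}
    (hp : IsParkedIn β j p) : runFrom (pairState p) (stages G β p ys) = pairState id := by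
  induction ys generalizing p with
  | nil => exact runFrom_exits hp
  | cons y ys ih =>
    obtain rfl := hys y (by simp)
    rw [stages, runFrom_append, runFrom_stage hp,
      ih (fun y' hy' => hys y' (by simp [hy'])) hp.advance]

lemma runFrom_flatMap_stages (js : List ℕ) :
    runFrom (pairState id) (js.flatMap fun j => stages G β id (block β j)) = pairState id := by
  induction js with
  | nil => rfl
  | cons j js ih =>
    rw [List.flatMap_cons, runFrom_append,
      runFrom_stages (fun y hy => mem_block.1 hy) (isParkedIn_id j), ih]

lemma produces_presentations {p q : V → V} {y : V} {xs : List V} (hxs : xs.Nodup)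
    (hxsy : ∀ x ∈ xs, β x = β y ∧ x ≠ y) (hq : ∀ v, β v = β y → q v = v)
    (hqp : ∀ u, G.Adj u y → β u < β y → p u ∈ xs → q u = p u) {x : V} (hx : x ∈ xs) :
    Produces (pairState q) (xs.flatMap (presentation G β p y)) {x, y} := by
  obtain ⟨s, t, rfl⟩ := List.append_of_mem hx
  have hs : s.Nodup := (List.nodup_append.1 hxs).1
  have hxy : β x = β y ∧ x ≠ y := hxsy x hx
  rw [List.flatMap_append, List.flatMap_cons, presentation, List.cons_append]
  refine Produces.append_left _ (Produces.append_right ?_ _)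
  rw [runFrom_presentations hs (fun x' hx' => hxsy x' (by simp [hx'])) hq
    (fun u hadj hlt hpu => hqp u hadj hlt (by simp [hpu]))]
  refine ⟨[(x, y)], by simp, y, ?_⟩
  simp only [runFrom_cons, runFrom_nil, applyGate, if_true, pairState, lt_irrefl, false_and,
    and_false, if_false, hq x hxy.1, hq y rfl, Finset.pair_eq_singleton]
  ext z; simp only [Finset.mem_symmDiff, Finset.mem_insert, Finset.mem_singleton]
  grind

lemma produces_stage_of_adj {p : V → V} {u y : V} (hp : IsParkedIn β (β y) p) (hadj : G.Adj u y)
    (hlt : β u < β y) : Produces (pairState p) (stage G β p y) {u, y} := by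
  have := produces_of_runFrom (t := pairState p) (C := stage G β p y) (w := u)
  rwa [runFrom_stage hp, pairState, GraphicParityNetwork.advance, if_pos ⟨hadj, hlt⟩] at this

lemma produces_stage_of_block {p : V → V} {x y : V} (hp : IsParkedIn β (β y) p)
    (hx : β x = β y) (hxy : x ≠ y) : Produces (pairState p) (stage G β p y) {x, y} := by
  rw [stage]
  refine Produces.append_left _ ?_
  rw [runFrom_entrants hp]
  exact produces_presentations ((block_nodup _).filter _) (fun x hx => by simpa using hx)
    (fun v hv => enter_of_block hp hv)
    (fun u _ hlt hpu => enter_of_parked hlt (by simpa using (List.mem_filter.1 hpu).1))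
    (by simp [hx, hxy])

lemma produces_stages {j : ℕ} {ys : List V} (hys : ∀ y ∈ ys, β y = j) {p : V → V}
    (hp : IsParkedIn β j p) {y : V} (hy : y ∈ ys) {S : Finset V}
    (hS : ∀ p, IsParkedIn β (β y) p → Produces (pairState p) (stage G β p y) S) :
    Produces (pairState p) (stages G β p ys) S := by
  induction ys generalizing p with
  | nil => simp at hy
  | cons y' ys ih =>
    obtain rfl := hys y' (by simp)
    rw [stages]
    rcases List.mem_cons.1 hy with rfl | hy
    · exact (hS p hp).append_right _
    · refine Produces.append_left _ ?_
      rw [runFrom_stage hp]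
      exact ih (fun y'' hy'' => hys y'' (by simp [hy''])) hp.advance hy

lemma produces_circuit {k : ℕ} {y : V} (hy : β y < k) {S : Finset V}
    (hS : ∀ p, IsParkedIn β (β y) p → Produces (pairState p) (stage G β p y) S) :
    Produces (pairState id) (circuit G β k) S := by
  obtain ⟨s, t, hst⟩ := List.append_of_mem (List.mem_range.2 hy)
  rw [circuit, hst, List.flatMap_append, List.flatMap_cons]
  refine Produces.append_left _ ?_
  rw [runFrom_flatMap_stages]
  exact Produces.append_right
    (produces_stages (fun y hy => mem_block.1 hy) (isParkedIn_id _) (mem_block.2 rfl) hS) _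

lemma ne_of_mem_stage {p : V → V} {y : V} {g : V × V} (hg : g ∈ stage G β p y) :
    g.1 ≠ g.2 := by
  simp only [stage, presentation, List.mem_append, List.mem_map, List.mem_flatMap,
    List.mem_cons, List.mem_filter, mem_entrants, mem_movers, mem_block, decide_eq_true_eq,
    List.not_mem_nil, or_false] at hg
  rcases hg with
    ⟨u, ⟨-, hlt, -⟩, rfl⟩ | ⟨x, ⟨-, hxy⟩, (rfl | ⟨u, ⟨-, hlt, -⟩, rfl⟩) | rfl⟩
  · exact fun h => hlt.ne' (congrArg β h)
  · exact hxy
  · exact fun h => hlt.ne' (congrArg β h)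
  · exact hxy

lemma ne_of_mem_stages {p : V → V} {ys : List V} {g : V × V} (hg : g ∈ stages G β p ys) :
    g.1 ≠ g.2 := by
  induction ys generalizing p with
  | nil =>
    simp only [stages, exits, List.mem_map, List.mem_filter] at hg
    obtain ⟨u, ⟨-, hu⟩, rfl⟩ := hg
    simpa using hu
  | cons y ys ih =>
    rcases List.mem_append.1 hg with hg | hg
    · exact ne_of_mem_stage hg
    · exact ih hg

theorem isGPN_circuit {k : ℕ} (hβ : ∀ v, β v < k) : IsGPN G (circuit G β k) := by
  refine ⟨fun g hg => ?_, fun u v huv => Produces.exists_runCircuit_take ?_, fun v => ?_⟩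
  · obtain ⟨j, -, hg⟩ := List.mem_flatMap.1 hg
    exact ne_of_mem_stages hg
  · rcases lt_trichotomy (β u) (β v) with h | h | h
    · exact produces_circuit (hβ v) fun p hp => produces_stage_of_adj hp huv h
    · exact produces_circuit (hβ v) fun p hp => produces_stage_of_block hp h huv.ne
    · rw [Finset.pair_comm]
      exact produces_circuit (hβ u) fun p hp => produces_stage_of_adj hp huv.symm h
  · have := congrFun (runFrom_flatMap_stages (G := G) (β := β) (List.range k)) v
    rwa [pairState_id] at this

lemma length_stage_le (p : V → V) (y : V) :
    (stage G β p y).length ≤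
      (earlierNeighborFinset G β y).card + 2 * (block β (β y)).length := by
  set xs := (block β (β y)).filter (· ≠ y)
  set L := entrants G β p y ++ xs.flatMap fun x => movers G β p x y
  have hlen : (stage G β p y).length = L.length + 2 * xs.length := by
    simp only [stage, presentation, L, xs, List.length_append, List.length_map, List.length_flatMap,
      List.length_cons, List.length_nil, List.sum_map_add, List.map_const', List.sum_replicate,
      smul_eq_mul]
    omega
  have hL : L.Nodup := by
    refine List.nodup_append.2 ⟨entrants_nodup p y,
      List.nodup_flatMap.2 ⟨fun x _ => movers_nodup p x y,
      ((block_nodup _).filter _).pairwise_of_forall_ne fun x _ x' _ hxx' u hu hu' => ?_⟩, ?_⟩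
    · exact hxx' ((mem_movers.1 hu).2.2.symm.trans (mem_movers.1 hu').2.2)
    · intro u hu u' hu' huu'
      subst huu'
      obtain ⟨x, hx, hux⟩ := List.mem_flatMap.1 hu'
      obtain ⟨-, hlt, hpu⟩ := mem_entrants.1 hu
      obtain ⟨-, -, hpx⟩ := mem_movers.1 hux
      have := (List.mem_filter.1 hx).1
      rw [mem_block, ← hpx, hpu] at this
      omega
  have hLsub : L.toFinset ⊆ earlierNeighborFinset G β y := by
    intro u hu
    simp only [L, List.mem_toFinset, List.mem_append, List.mem_flatMap, mem_entrants,
      mem_movers] at hu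
    simp only [earlierNeighborFinset, Finset.mem_filter, Finset.mem_univ, true_and]
    rcases hu with ⟨h1, h2, -⟩ | ⟨x, -, h1, h2, -⟩ <;> exact ⟨h1, h2⟩
  have hxs : xs.length ≤ (block β (β y)).length := List.length_filter_le _ _
  have := Finset.card_le_card hLsub
  rw [List.toFinset_card_of_nodup hL] at this
  omega

lemma length_exits_le (p : V → V) : (exits p).length ≤ Fintype.card V := by
  simpa [exits] using (List.length_filter_le _ Finset.univ.toList).trans_eq (by simp)

lemma length_stages_le {b : ℕ} {ys : List V} (hb : ∀ y ∈ ys, (block β (β y)).length ≤ b)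
    (p : V → V) : (stages G β p ys).length ≤
      (ys.map fun y => (earlierNeighborFinset G β y).card + 2 * b).sum + Fintype.card V := by
  induction ys generalizing p with
  | nil => simpa [stages] using length_exits_le p
  | cons y ys ih =>
    have h1 := length_stage_le (G := G) (β := β) p y
    have h2 := ih (fun y' hy' => hb y' (by simp [hy'])) (advance G β p y)
    have h3 := hb y (by simp)
    simp only [stages, List.length_append, List.map_cons, List.sum_cons]
    omega

lemma length_circuit_le {k b : ℕ} (hβ : ∀ v, β v < k)
    (hb : ∀ j, (block β j).length ≤ b) :
    (circuit G β k).length ≤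
      ∑ y, (earlierNeighborFinset G β y).card + 2 * b * Fintype.card V + k * Fintype.card V := by
  set f : V → ℕ := fun y => (earlierNeighborFinset G β y).card + 2 * b
  calc (circuit G β k).length
      ≤ ((List.range k).map fun j => ((block β j).map f).sum + Fintype.card V).sum := by
        rw [circuit, List.length_flatMap]
        exact List.sum_le_sum fun j _ => length_stages_le (fun y _ => hb _) id
    _ = ∑ j ∈ Finset.range k,
          (∑ y ∈ Finset.univ.filter (fun v => β v = j), f y + Fintype.card V) := by
        rw [← List.toFinset_range, List.sum_toFinset _ List.nodup_range]
        simp only [block, Finset.sum_map_toList]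
    _ = ∑ y, f y + k * Fintype.card V := by
        rw [Finset.sum_add_distrib,
          Finset.sum_fiberwise_of_maps_to (fun v _ => Finset.mem_range.2 (hβ v)),
          Finset.sum_const, Finset.card_range, smul_eq_mul]
    _ = _ := by
        simp only [f, Finset.sum_add_distrib, Finset.sum_const, Finset.card_univ, smul_eq_mul]
        ring

lemma sum_card_earlierNeighborFinset_le :
    ∑ y, (earlierNeighborFinset G β y).card ≤ G.edgeFinset.card := by
  rw [← Finset.card_sigma]
  refine Finset.card_le_card_of_injOn (fun e => s(e.2, e.1)) ?_ ?_
  · rintro ⟨y, u⟩ h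
    simp only [Finset.coe_sigma, Set.mem_sigma_iff, Finset.mem_coe, earlierNeighborFinset,
      Finset.mem_filter, Finset.mem_univ, true_and] at h
    simpa using h.1
  · rintro ⟨y, u⟩ h ⟨y', u'⟩ h' he
    simp only [Finset.coe_sigma, Set.mem_sigma_iff, Finset.mem_coe, earlierNeighborFinset,
      Finset.mem_filter, Finset.mem_univ, true_and] at h h'
    rcases Sym2.eq_iff.1 he with ⟨rfl, rfl⟩ | ⟨rfl, rfl⟩
    · rfl
    · simp only at h'
      omega

end Construction

theorem exists_isGPN_length_le_of_blocks {V : Type*} [DecidableEq V] [Fintype V]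
    (G : SimpleGraph V) [DecidableRel G.Adj] (β : V → ℕ) {k b : ℕ} (hβ : ∀ v, β v < k)
    (hb : ∀ j, (Finset.univ.filter fun v => β v = j).card ≤ b) :
    ∃ C, IsGPN G C ∧
      C.length ≤ G.edgeFinset.card + 2 * b * Fintype.card V + k * Fintype.card V :=
  ⟨circuit G β k, isGPN_circuit hβ,
    (length_circuit_le hβ fun j => (Finset.length_toList _).trans_le (hb j)).trans
      (by have := sum_card_earlierNeighborFinset_le (G := G) (β := β); omega)⟩

lemma card_filter_div_eq_le {n b : ℕ} (hb : 0 < b) (j : ℕ) :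
    (Finset.univ.filter fun v : Fin n => v / b = j).card ≤ b := by
  calc (Finset.univ.filter fun v : Fin n => v / b = j).card ≤ (Finset.range b).card := by
        refine Finset.card_le_card_of_injOn (fun v => v % b)
          (fun v _ => Finset.mem_range.2 (Nat.mod_lt _ hb)) ?_
        intro v hv v' hv' h
        simp only [Finset.mem_coe, Finset.mem_filter, Finset.mem_univ, true_and] at hv hv'
        exact Fin.ext <| by
          rw [← Nat.div_add_mod v b, ← Nat.div_add_mod v' b, hv, hv']; exact congrArg _ h
    _ = b := Finset.card_range b

theorem exists_isGPN_length_le {n : ℕ} (hn : 0 < n) (G : SimpleGraph (Fin n))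
    [DecidableRel G.Adj] :
    ∃ C, IsGPN G C ∧ C.length ≤ G.edgeFinset.card + 6 * n * Nat.sqrt n := by
  set b := Nat.sqrt n
  have hb : 0 < b := Nat.sqrt_pos.2 hn
  have hnb : n / b ≤ b + 2 :=
    Nat.div_le_of_le_mul (by nlinarith [Nat.lt_succ_sqrt' n])
  obtain ⟨C, hC, hlen⟩ := exists_isGPN_length_le_of_blocks G (fun v : Fin n => (v : ℕ) / b)
    (k := n / b + 1) (fun v => Nat.lt_succ_of_le (Nat.div_le_div_right v.isLt.le))
    (card_filter_div_eq_le hb)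
  refine ⟨C, hC, hlen.trans ?_⟩
  rw [Fintype.card_fin]
  nlinarith

lemma mul_sqrt_le_rpow_mul_sqrt_log {n : ℕ} (hn : 2 ≤ n) :
    (n * Nat.sqrt n : ℝ) ≤ 2 * (n : ℝ) ^ ((3 : ℝ) / 2) * √(Real.log n) := by
  have hpow : (n : ℝ) ^ ((3 : ℝ) / 2) = n * √n := by
    rw [show (3 : ℝ) / 2 = 1 + 1 / 2 by norm_num, Real.rpow_add (by positivity), Real.rpow_one,
      Real.sqrt_eq_rpow]
  have hlog : 1 / 2 ≤ √(Real.log n) := by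
    rw [Real.le_sqrt (by norm_num) (Real.log_nonneg (by exact_mod_cast (by omega : 1 ≤ n)))]
    have := Real.log_le_log (by norm_num) (by exact_mod_cast hn : (2 : ℝ) ≤ n)
    linarith [Real.log_two_gt_d9]
  calc (n * Nat.sqrt n : ℝ) ≤ n * √n := by gcongr; exact Real.nat_sqrt_le_real_sqrt
    _ = 2 * (n * √n) * (1 / 2) := by ring
    _ ≤ 2 * (n * √n) * √(Real.log n) := by gcongr
    _ = _ := by rw [hpow]

end GraphicParityNetwork

/-- There is a constant `K > 0` such that every graph on `n ≥ 2` vertices with `m`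
edges admits a graphic parity network of size at most `m + K · n^(3/2) · √(ln n)`. -/
theorem stmt2 : ∃ K : ℝ, 0 < K ∧ ∀ n : ℕ, 2 ≤ n → ∀ G : SimpleGraph (Fin n),
    ∃ C : List (Fin n × Fin n), IsGPN G C ∧
      (C.length : ℝ) ≤ (Nat.card G.edgeSet : ℝ) +
        K * (n : ℝ) ^ ((3 : ℝ) / 2) * Real.sqrt (Real.log n) := by
  refine ⟨12, by norm_num, fun n hn G => ?_⟩
  classical
  obtain ⟨C, hC, hlen⟩ := GraphicParityNetwork.exists_isGPN_length_le (by omega) G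
  refine ⟨C, hC, ?_⟩
  rw [Nat.card_eq_fintype_card, ← SimpleGraph.edgeFinset_card]
  have := GraphicParityNetwork.mul_sqrt_le_rpow_mul_sqrt_log hn
  calc (C.length : ℝ) ≤ G.edgeFinset.card + 6 * (n * Nat.sqrt n) := by
        rw [← mul_assoc]; exact_mod_cast hlen
    _ ≤ _ := by linarith
end

section
/- Let S be a finite set with p = |S| elements and let T be a finite list of q ordered triples of pairwise distinct elements of S. Construct the graph G(S,T) on 2p + 14q vertices as follows. The vertex set is S ∪ C ∪ U ∪ Z, where C = {v₁ⁱ, v₃ⁱ : 1 ≤ i ≤ q}, U = {u₁, …, u_p}, and Z = {z_jⁱ : 1 ≤ i ≤ q, 1 ≤ j ≤ 12}; for the i-th triple (a, b, c) of T write v₀ⁱ = a, v₂ⁱ = b, v₄ⁱ = c (these are vertices in S). The edges are: (i) all pairs of distinct vertices of C except the pairs {v₁ⁱ, v₃ⁱ} with equal superscript i; (ii) all pairs with one vertex in S and the other in C; (iii) all pairs with one vertex in U and the other vertex in S ∪ C ∪ U; (iv) for each i ∈ {1,…,q} and each j ∈ {0, 1, 2}, each of the four vertices z_{4j+1}ⁱ,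 z_{4j+2}ⁱ, z_{4j+3}ⁱ, z_{4j+4}ⁱ is adjacent to each of v_jⁱ, v_{j+1}ⁱ, v_{j+2}ⁱ; and no other edges. Then G(S,T) is a perfect cancellation graph if and only if there exists a linear order π on S such that for every triple (x, y, z) in T either x <_π y <_π z or z <_π y <_π x. -/
/-- A set `U` is `σ`-linked if any two vertices of `U` that are consecutive in the
restriction of the ordering `σ` to `U` are adjacent in `G`. -/
def SigmaLinked {V : Type*} (G : SimpleGraph V) {n : ℕ} (σ : V ≃ Fin n) (U : Set V) :
    Prop :=
  ∀ ⦃a b : V⦄, a ∈ U → b ∈ U → σ a < σ b →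
    (∀ w ∈ U, ¬(σ a < σ w ∧ σ w < σ b)) → G.Adj a b

/-- The set of neighbors of `v` occurring after `v` in the ordering `σ`. -/
def NPlus {V : Type*} (G : SimpleGraph V) {n : ℕ} (σ : V ≃ Fin n) (v : V) : Set V :=
  {u | G.Adj v u ∧ σ v < σ u}

/-- `σ` is a perfect cancellation ordering of `G`: for every vertex `v` and every
connected component `K` of `G − v`, the set `N⁺_σ(v) ∩ K` is `σ`-linked. -/
def IsPCO {V : Type*} [Fintype V] (G : SimpleGraph V)
    (σ : V ≃ Fin (Fintype.card V)) : Prop :=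
  ∀ (v : V) (K : (G.induce {u : V | u ≠ v}).ConnectedComponent),
    SigmaLinked G σ (NPlus G σ v ∩ (Subtype.val '' K.supp))

/-- A perfect cancellation graph is a graph admitting a perfect cancellation ordering. -/
def PerfectCancellationGraph {V : Type*} [Fintype V] (G : SimpleGraph V) : Prop :=
  ∃ σ : V ≃ Fin (Fintype.card V), IsPCO G σ

/-- The vertex set of the reduction graph: `S` (elements of the betweenness instance),
`C = {v₁ⁱ, v₃ⁱ}` (`c i 0 = v₁ⁱ`, `c i 1 = v₃ⁱ`), `U` (`p` universal-in-`S ∪ C ∪ U`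
vertices) and `Z` (twelve enforcing vertices per triple): `2p + 14q` vertices. -/
inductive Vtx (p q : ℕ) where
  | s : Fin p → Vtx p q
  | c : Fin q → Fin 2 → Vtx p q
  | u : Fin p → Vtx p q
  | z : Fin q → Fin 12 → Vtx p q
  deriving DecidableEq, Fintype

/-- For the `i`-th triple `(a, b, c)`, the path `v₀ⁱ, v₁ⁱ, v₂ⁱ, v₃ⁱ, v₄ⁱ`, where
`v₀ⁱ = a`, `v₂ⁱ = b`, `v₄ⁱ = c` lie in `S` and `v₁ⁱ, v₃ⁱ` lie in `C`. -/
def pathV {p q : ℕ} (T : Fin q → Fin p × Fin p × Fin p) (i : Fin q) (j : ℕ) :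
    Vtx p q :=
  if j = 0 then .s (T i).1
  else if j = 1 then .c i 0
  else if j = 2 then .s (T i).2.1
  else if j = 3 then .c i 1
  else .s (T i).2.2

/-- The edges of the reduction graph `G(S, T)` (to be symmetrized by `fromRel`):
(i) two `C`-vertices are adjacent iff their superscripts differ;
(ii) every `S`-vertex is adjacent to every `C`-vertex;
(iii) every `U`-vertex is adjacent to every other vertex of `S ∪ C ∪ U`;
(iv) the `z j i` with `j ∈ {4g, …, 4g + 3}` (group `g = j / 4 ∈ {0, 1, 2}`) are
adjacent exactly to `v_gⁱ, v_{g+1}ⁱ, v_{g+2}ⁱ`; and there are no other edges. -/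
def baseRel {p q : ℕ} (T : Fin q → Fin p × Fin p × Fin p) :
    Vtx p q → Vtx p q → Prop
  | .c i _, .c i' _ => i ≠ i'
  | .s _, .c _ _ => True
  | .u _, .s _ => True
  | .u _, .c _ _ => True
  | .u _, .u _ => True
  | .z i j, w => w = pathV T i (j.val / 4) ∨ w = pathV T i (j.val / 4 + 1) ∨
      w = pathV T i (j.val / 4 + 2)
  | _, _ => False


-- membership in the PCO set
lemma mem_pco_set {V : Type*} [Fintype V] {G : SimpleGraph V}
    {σ : V ≃ Fin (Fintype.card V)} {v : V}
    {K : (G.induce {u : V | u ≠ v}).ConnectedComponent} {x : V} :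
    x ∈ (NPlus G σ v ∩ (Subtype.val '' K.supp)) ↔
      (G.Adj v x ∧ σ v < σ x) ∧ ∃ h : x ≠ v,
        (G.induce {u : V | u ≠ v}).connectedComponentMk ⟨x, h⟩ = K := by
  constructor
  · rintro ⟨h1, ⟨⟨y, hy⟩, hK, rfl⟩⟩
    exact ⟨h1, hy, hK⟩
  · rintro ⟨h1, h, hK⟩
    exact ⟨h1, ⟨x, h⟩, hK, rfl⟩

lemma induce_adj' {V : Type*} {G : SimpleGraph V} {v x y : V} (hx : x ≠ v) (hy : y ≠ v)
    (h : G.Adj x y) :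
    (G.induce {u : V | u ≠ v}).Adj ⟨x, hx⟩ ⟨y, hy⟩ := by
  simpa using h

/-- Lemma A : a strengthened per-vertex condition implies IsPCO. -/
lemma isPCO_of_strong {V : Type*} [Fintype V] (G : SimpleGraph V)
    (σ : V ≃ Fin (Fintype.card V))
    (h : ∀ v a b, G.Adj v a → G.Adj v b → σ v < σ a → σ a < σ b → ¬ G.Adj a b →
      ∃ w, G.Adj v w ∧ G.Adj a w ∧ σ a < σ w ∧ σ w < σ b) : IsPCO G σ := by
  intro v K a b ha hb hab hcons
  rw [mem_pco_set] at ha hb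
  obtain ⟨⟨hva, hσva⟩, hav, haK⟩ := ha
  obtain ⟨⟨hvb, hσvb⟩, hbv, hbK⟩ := hb
  by_contra hadj
  obtain ⟨w, hvw, haw, h1, h2⟩ := h v a b hva hvb hσva hab hadj
  refine absurd (hcons w ?_) (by simp [h1, h2])
  rw [mem_pco_set]
  refine ⟨⟨hvw, lt_trans hσva h1⟩, hvw.ne', ?_⟩
  rw [← haK]
  exact SimpleGraph.ConnectedComponent.connectedComponentMk_eq_of_adj
    (induce_adj' hvw.ne' hav haw.symm)

section Blemmas
variable {V : Type*} [Fintype V] {G : SimpleGraph V} {σ : V ≃ Fin (Fintype.card V)}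

/-- extract a minimal element of the PCO set in a half-open σ-interval, and show
it is adjacent to the left end. -/
lemma exists_succ (hP : IsPCO G σ) (v : V) (K : (G.induce {u : V | u ≠ v}).ConnectedComponent)
    {a b : V} (ha : a ∈ NPlus G σ v ∩ (Subtype.val '' K.supp))
    (hb : b ∈ NPlus G σ v ∩ (Subtype.val '' K.supp)) (hab : σ a < σ b) :
    ∃ t ∈ NPlus G σ v ∩ (Subtype.val '' K.supp), G.Adj a t ∧ σ a < σ t ∧ σ t ≤ σ b := by
  classical
  set A := NPlus G σ v ∩ (Subtype.val '' K.supp) with hA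
  set S : Set ℕ := {n | ∃ t ∈ A, σ a < σ t ∧ σ t ≤ σ b ∧ (σ t : ℕ) = n} with hS
  have hne : S.Nonempty := ⟨(σ b : ℕ), b, hb, hab, le_refl _, rfl⟩
  obtain ⟨t, htA, hat, htb, htn⟩ := Nat.sInf_mem hne
  refine ⟨t, htA, ?_, hat, htb⟩
  refine hP v K ha htA hat ?_
  intro w hw ⟨h1, h2⟩
  have : sInf S ≤ (σ w : ℕ) := Nat.sInf_le ⟨w, hw, h1, le_of_lt (lt_of_lt_of_le h2 htb), rfl⟩
  rw [← htn] at this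
  have h2n : (σ w : ℕ) < (σ t : ℕ) := h2
  omega

/-- Core of the forcing lemma: three private vertices after `x` force a contradiction. -/
lemma B_core (hP : IsPCO G σ) {x y z u1 u2 u3 : V}
    (hxy : G.Adj x y) (hnxz : ¬ G.Adj x z)
    (hN1 : ∀ w, G.Adj u1 w ↔ (w = x ∨ w = y ∨ w = z))
    (hN2 : ∀ w, G.Adj u2 w ↔ (w = x ∨ w = y ∨ w = z))
    (hN3 : ∀ w, G.Adj u3 w ↔ (w = x ∨ w = y ∨ w = z))
    (h12 : σ u1 < σ u2) (h23 : σ u2 < σ u3)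
    (hx1 : σ x < σ u1) (hx2 : σ x < σ u2) (hx3 : σ x < σ u3) : False := by
  have hux : ∀ {u : V}, (∀ w, G.Adj u w ↔ (w = x ∨ w = y ∨ w = z)) → u ≠ x := by
    intro u hN hu
    exact G.irrefl (hu ▸ ((hN x).2 (Or.inl rfl)))
  have huy : ∀ {u : V}, (∀ w, G.Adj u w ↔ (w = x ∨ w = y ∨ w = z)) → u ≠ y := by
    intro u hN hu
    exact G.irrefl (hu ▸ ((hN y).2 (Or.inr (Or.inl rfl))))
  have hyx : y ≠ x := hxy.ne'
  set K := (G.induce {u : V | u ≠ x}).connectedComponentMk ⟨u1, hux hN1⟩ with hK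
  have hmem : ∀ (u : V) (hN : ∀ w, G.Adj u w ↔ (w = x ∨ w = y ∨ w = z)),
      σ x < σ u → u ∈ NPlus G σ x ∩ (Subtype.val '' K.supp) := by
    intro u hN hσ
    rw [mem_pco_set]
    refine ⟨⟨((hN x).2 (Or.inl rfl)).symm, hσ⟩, hux hN, ?_⟩
    rw [hK]
    refine SimpleGraph.ConnectedComponent.sound ?_
    have r1 : (G.induce {u : V | u ≠ x}).Adj ⟨u, hux hN⟩ ⟨y, hyx⟩ :=
      induce_adj' (hux hN) hyx ((hN y).2 (Or.inr (Or.inl rfl)))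
    have r2 : (G.induce {u : V | u ≠ x}).Adj ⟨y, hyx⟩ ⟨u1, hux hN1⟩ :=
      induce_adj' hyx (hux hN1) (((hN1 y).2 (Or.inr (Or.inl rfl)))).symm
    exact r1.reachable.trans r2.reachable
  have hm1 := hmem u1 hN1 hx1
  have hm2 := hmem u2 hN2 hx2
  have hm3 := hmem u3 hN3 hx3
  have hty : ∀ {a b : V} (hN : ∀ w, G.Adj a w ↔ (w = x ∨ w = y ∨ w = z)),
      a ∈ NPlus G σ x ∩ (Subtype.val '' K.supp) →
      b ∈ NPlus G σ x ∩ (Subtype.val '' K.supp) → σ a < σ b →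
      σ a < σ y ∧ σ y ≤ σ b := by
    intro a b hN ha hb hab
    obtain ⟨t, htA, hat, ht1, ht2⟩ := exists_succ hP x K ha hb hab
    have htx : G.Adj x t := ((mem_pco_set.1 htA).1).1
    rcases (hN t).1 hat with rfl | rfl | rfl
    · exact absurd htx (G.irrefl)
    · exact ⟨ht1, ht2⟩
    · exact absurd htx hnxz
  obtain ⟨hy1, hy2⟩ := hty hN1 hm1 hm2 h12
  obtain ⟨hy3, _⟩ := hty hN2 hm2 hm3 h23
  exact absurd (lt_of_le_of_lt hy2 hy3) (lt_irrefl _)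

/-- Unsorted version of the core lemma. -/
lemma B_core' (hP : IsPCO G σ) {x y z u1 u2 u3 : V}
    (hxy : G.Adj x y) (hnxz : ¬ G.Adj x z)
    (hN1 : ∀ w, G.Adj u1 w ↔ (w = x ∨ w = y ∨ w = z))
    (hN2 : ∀ w, G.Adj u2 w ↔ (w = x ∨ w = y ∨ w = z))
    (hN3 : ∀ w, G.Adj u3 w ↔ (w = x ∨ w = y ∨ w = z))
    (h12 : u1 ≠ u2) (h13 : u1 ≠ u3) (h23 : u2 ≠ u3)
    (hx1 : σ x < σ u1) (hx2 : σ x < σ u2) (hx3 : σ x < σ u3) : False := by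
  have d12 : σ u1 ≠ σ u2 := fun h => h12 (σ.injective h)
  have d13 : σ u1 ≠ σ u3 := fun h => h13 (σ.injective h)
  have d23 : σ u2 ≠ σ u3 := fun h => h23 (σ.injective h)
  rcases d12.lt_or_gt with h1 | h1 <;> rcases d13.lt_or_gt with h2 | h2 <;>
    rcases d23.lt_or_gt with h3 | h3
  · exact B_core hP hxy hnxz hN1 hN2 hN3 h1 h3 hx1 hx2 hx3
  · exact B_core hP hxy hnxz hN1 hN3 hN2 h2 h3 hx1 hx3 hx2
  · exact absurd (h2.trans (h1.trans h3)) (lt_irrefl _)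
  · exact B_core hP hxy hnxz hN3 hN1 hN2 h2 h1 hx3 hx1 hx2
  · exact B_core hP hxy hnxz hN2 hN1 hN3 h1 h2 hx2 hx1 hx3
  · exact absurd (h2.trans (h3.trans h1)) (lt_irrefl _)
  · exact B_core hP hxy hnxz hN2 hN3 hN1 h3 h2 hx2 hx3 hx1
  · exact B_core hP hxy hnxz hN3 hN2 hN1 h3 h1 hx3 hx2 hx1

lemma B_half (hP : IsPCO G σ) {x y z u1 u2 u3 : V}
    (hxy : G.Adj x y) (hyz : G.Adj y z) (hnxz : ¬ G.Adj x z)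
    (hN1 : ∀ w, G.Adj u1 w ↔ (w = x ∨ w = y ∨ w = z))
    (hN2 : ∀ w, G.Adj u2 w ↔ (w = x ∨ w = y ∨ w = z))
    (hN3 : ∀ w, G.Adj u3 w ↔ (w = x ∨ w = y ∨ w = z))
    (h12 : u1 ≠ u2) (h13 : u1 ≠ u3) (h23 : u2 ≠ u3)
    (hxz : σ x < σ z) (hy : σ y < σ x ∨ σ z < σ y) : False := by
  have hux : ∀ {u : V}, (∀ w, G.Adj u w ↔ (w = x ∨ w = y ∨ w = z)) → u ≠ x := by
    intro u hN hu
    exact G.irrefl (hu ▸ ((hN x).2 (Or.inl rfl)))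
  have huy : ∀ {u : V}, (∀ w, G.Adj u w ↔ (w = x ∨ w = y ∨ w = z)) → u ≠ y := by
    intro u hN hu
    exact G.irrefl (hu ▸ ((hN y).2 (Or.inr (Or.inl rfl))))
  have huz : ∀ {u : V}, (∀ w, G.Adj u w ↔ (w = x ∨ w = y ∨ w = z)) → u ≠ z := by
    intro u hN hu
    exact G.irrefl (hu ▸ ((hN z).2 (Or.inr (Or.inr rfl))))
  -- Step 1 : every private vertex comes after x
  have step1 : ∀ {u : V}, (∀ w, G.Adj u w ↔ (w = x ∨ w = y ∨ w = z)) → σ x < σ u := by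
    intro u hN
    by_contra hcon
    have hux' : σ u ≠ σ x := fun h => (hux hN) (σ.injective h)
    have hlt : σ u < σ x := lt_of_le_of_ne (not_lt.1 hcon) hux'
    set K := (G.induce {w : V | w ≠ u}).connectedComponentMk
      ⟨x, fun h => (hux hN) h.symm⟩ with hK
    have hxA : x ∈ NPlus G σ u ∩ (Subtype.val '' K.supp) := by
      rw [mem_pco_set]
      exact ⟨⟨(hN x).2 (Or.inl rfl), hlt⟩, fun h => (hux hN) h.symm, by rw [hK]⟩
    have hzA : z ∈ NPlus G σ u ∩ (Subtype.val '' K.supp) := by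
      rw [mem_pco_set]
      refine ⟨⟨(hN z).2 (Or.inr (Or.inr rfl)), hlt.trans hxz⟩,
        fun h => (huz hN) h.symm, ?_⟩
      rw [hK]
      refine SimpleGraph.ConnectedComponent.sound ?_
      have r1 : (G.induce {w : V | w ≠ u}).Adj ⟨z, fun h => (huz hN) h.symm⟩
          ⟨y, fun h => (huy hN) h.symm⟩ :=
        induce_adj' _ _ hyz.symm
      have r2 : (G.induce {w : V | w ≠ u}).Adj ⟨y, fun h => (huy hN) h.symm⟩
          ⟨x, fun h => (hux hN) h.symm⟩ :=
        induce_adj' _ _ hxy.symm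
      exact r1.reachable.trans r2.reachable
    refine hnxz (hP u K hxA hzA hxz ?_)
    intro w hw hbet
    have : G.Adj u w := (mem_pco_set.1 hw).1.1
    rcases (hN w).1 this with rfl | rfl | rfl
    · exact lt_irrefl _ hbet.1
    · rcases hy with hy' | hy'
      · exact lt_irrefl _ (hy'.trans hbet.1)
      · exact lt_irrefl _ (hy'.trans hbet.2)
    · exact lt_irrefl _ hbet.2
  exact B_core' hP hxy hnxz hN1 hN2 hN3 h12 h13 h23 (step1 hN1) (step1 hN2) (step1 hN3)

/-- The forcing lemma: a vertex `y` adjacent to non-adjacent `x, z`, with three private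
degree-three vertices seeing exactly `{x, y, z}`, must lie σ-between `x` and `z`. -/
lemma B_main (hP : IsPCO G σ) {x y z u1 u2 u3 : V}
    (hxy : G.Adj x y) (hyz : G.Adj y z) (hnxz : ¬ G.Adj x z) (hxz : x ≠ z)
    (hN1 : ∀ w, G.Adj u1 w ↔ (w = x ∨ w = y ∨ w = z))
    (hN2 : ∀ w, G.Adj u2 w ↔ (w = x ∨ w = y ∨ w = z))
    (hN3 : ∀ w, G.Adj u3 w ↔ (w = x ∨ w = y ∨ w = z))
    (h12 : u1 ≠ u2) (h13 : u1 ≠ u3) (h23 : u2 ≠ u3) :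
    (σ x < σ y ∧ σ y < σ z) ∨ (σ z < σ y ∧ σ y < σ x) := by
  have hσxz : σ x ≠ σ z := fun h => hxz (σ.injective h)
  have hσxy : σ x ≠ σ y := fun h => hxy.ne (σ.injective h)
  have hσyz : σ y ≠ σ z := fun h => hyz.ne (σ.injective h)
  by_contra hcon
  push_neg at hcon
  rcases hσxz.lt_or_gt with h | h
  · refine B_half hP hxy hyz hnxz hN1 hN2 hN3 h12 h13 h23 h ?_
    rcases hσxy.lt_or_gt with h' | h'
    · exact Or.inr (lt_of_le_of_ne (hcon.1 h') hσyz.symm)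
    · exact Or.inl h'
  · have hN1' : ∀ w, G.Adj u1 w ↔ (w = z ∨ w = y ∨ w = x) := fun w => (hN1 w).trans (by tauto)
    have hN2' : ∀ w, G.Adj u2 w ↔ (w = z ∨ w = y ∨ w = x) := fun w => (hN2 w).trans (by tauto)
    have hN3' : ∀ w, G.Adj u3 w ↔ (w = z ∨ w = y ∨ w = x) := fun w => (hN3 w).trans (by tauto)
    refine B_half hP hyz.symm hxy.symm (fun hc => hnxz hc.symm) hN1' hN2' hN3' h12 h13 h23 h ?_
    rcases hσyz.lt_or_gt with h' | h'
    · exact Or.inl h'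
    · exact Or.inr (lt_of_le_of_ne (hcon.2 h') hσxy)

section adj
variable {p q : ℕ} {T : Fin q → Fin p × Fin p × Fin p}

lemma pathV_ne_z {i i' : Fin q} {j : ℕ} {j' : Fin 12} : pathV T i j ≠ .z i' j' := by
  unfold pathV
  repeat' split
  all_goals simp

lemma pathV_ne_u {i : Fin q} {j : ℕ} {m : Fin p} : pathV T i j ≠ .u m := by
  unfold pathV
  repeat' split
  all_goals simp

local notation "GT" => SimpleGraph.fromRel (baseRel T)

lemma adj_ss {k k' : Fin p} : ¬ (GT).Adj (.s k) (.s k') := by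
  simp [SimpleGraph.fromRel_adj, baseRel]

lemma adj_sc {k : Fin p} {i : Fin q} {t : Fin 2} : (GT).Adj (.s k) (.c i t) := by
  simp [SimpleGraph.fromRel_adj, baseRel]

lemma adj_us {k : Fin p} {m : Fin p} : (GT).Adj (.u m) (.s k) := by
  simp [SimpleGraph.fromRel_adj, baseRel]

lemma adj_uc {m : Fin p} {i : Fin q} {t : Fin 2} : (GT).Adj (.u m) (.c i t) := by
  simp [SimpleGraph.fromRel_adj, baseRel]

lemma adj_uu {m m' : Fin p} (h : m ≠ m') : (GT).Adj (.u m) (.u m') := by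
  simp [SimpleGraph.fromRel_adj, baseRel, h]

lemma adj_cc {i i' : Fin q} {t t' : Fin 2} (h : i ≠ i') :
    (GT).Adj (.c i t) (.c i' t') := by
  simp [SimpleGraph.fromRel_adj, baseRel, h]

lemma not_adj_cc {i : Fin q} {t t' : Fin 2} : ¬ (GT).Adj (.c i t) (.c i t') := by
  simp [SimpleGraph.fromRel_adj, baseRel]

lemma not_adj_uz {m : Fin p} {i : Fin q} {j : Fin 12} : ¬ (GT).Adj (.u m) (.z i j) := by
  simp only [SimpleGraph.fromRel_adj, baseRel]
  rintro ⟨-, h | h⟩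
  · exact h
  · rcases h with h | h | h <;> exact pathV_ne_u h.symm

lemma adj_z_iff {i : Fin q} {j : Fin 12} {w : Vtx p q} :
    (GT).Adj (.z i j) w ↔ (w = pathV T i (j.val / 4) ∨ w = pathV T i (j.val / 4 + 1) ∨
      w = pathV T i (j.val / 4 + 2)) := by
  rw [SimpleGraph.fromRel_adj]
  constructor
  · rintro ⟨hne, h | h⟩
    · exact h
    · exfalso
      cases w with
      | s k => simpa [baseRel] using h
      | c i' t' => simpa [baseRel] using h
      | u m => simpa [baseRel] using h
      | z i' j' =>
        simp only [baseRel] at h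
        rcases h with h | h | h <;> exact pathV_ne_z h.symm
  · intro h
    refine ⟨?_, Or.inl (by simpa [baseRel] using h)⟩
    rcases h with h | h | h <;> (rintro rfl; exact pathV_ne_z h.symm)
end adj



section backward
variable {p q : ℕ} {T : Fin q → Fin p × Fin p × Fin p}

lemma pathV_eval (i : Fin q) :
    pathV T i 0 = .s (T i).1 ∧ pathV T i 1 = .c i 0 ∧ pathV T i 2 = .s (T i).2.1 ∧
    pathV T i 3 = .c i 1 ∧ pathV T i 4 = .s (T i).2.2 := by
  refine ⟨rfl, rfl, rfl, rfl, rfl⟩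

lemma zdiv_eval : ((0 : Fin 12) : ℕ)/4 = 0 ∧ ((1 : Fin 12) : ℕ)/4 = 0 ∧
    ((2 : Fin 12) : ℕ)/4 = 0 ∧ ((4 : Fin 12) : ℕ)/4 = 1 ∧ ((5 : Fin 12) : ℕ)/4 = 1 ∧
    ((6 : Fin 12) : ℕ)/4 = 1 ∧ ((8 : Fin 12) : ℕ)/4 = 2 ∧ ((9 : Fin 12) : ℕ)/4 = 2 ∧
    ((10 : Fin 12) : ℕ)/4 = 2 := by decide

lemma backward_btw [Fintype (Vtx p q)]
    {σ : Vtx p q ≃ Fin (Fintype.card (Vtx p q))}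
    (hP : IsPCO (SimpleGraph.fromRel (baseRel T)) σ)
    (hT : ∀ i : Fin q,
      (T i).1 ≠ (T i).2.1 ∧ (T i).1 ≠ (T i).2.2 ∧ (T i).2.1 ≠ (T i).2.2) (i : Fin q) :
    (σ (.s (T i).1) < σ (.s (T i).2.1) ∧ σ (.s (T i).2.1) < σ (.s (T i).2.2)) ∨
    (σ (.s (T i).2.2) < σ (.s (T i).2.1) ∧ σ (.s (T i).2.1) < σ (.s (T i).1)) := by
  obtain ⟨hab, hac, hbc⟩ := hT i
  have hN : ∀ (j : Fin 12) (g : ℕ), (j : ℕ)/4 = g → ∀ w : Vtx p q,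
      (SimpleGraph.fromRel (baseRel T)).Adj (.z i j) w ↔
        (w = pathV T i g ∨ w = pathV T i (g+1) ∨ w = pathV T i (g+2)) := by
    intro j g hg w
    rw [adj_z_iff, hg]
  obtain ⟨e0, e1, e2, e3, e4⟩ := pathV_eval (T := T) i
  obtain ⟨d0, d1, d2, d4, d5, d6, d8, d9, d10⟩ := zdiv_eval
  have R0 := B_main hP (x := Vtx.s (T i).1) (y := .c i 0) (z := .s (T i).2.1)
    adj_sc adj_sc.symm adj_ss (by simp [hab])
    (by rw [← e0, ← e1, ← e2]; exact hN 0 0 d0)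
    (by rw [← e0, ← e1, ← e2]; exact hN 1 0 d1)
    (by rw [← e0, ← e1, ← e2]; exact hN 2 0 d2)
    (by simp) (by simp) (by simp)
  have R1 := B_main hP (x := Vtx.c i 0) (y := .s (T i).2.1) (z := .c i 1)
    adj_sc.symm adj_sc not_adj_cc (by simp)
    (by rw [← e1, ← e2, ← e3]; exact hN 4 1 d4)
    (by rw [← e1, ← e2, ← e3]; exact hN 5 1 d5)
    (by rw [← e1, ← e2, ← e3]; exact hN 6 1 d6)
    (by simp) (by simp) (by simp)
  have R2 := B_main hP (x := Vtx.s (T i).2.1) (y := .c i 1) (z := .s (T i).2.2)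
    adj_sc adj_sc.symm adj_ss (by simp [hbc])
    (by rw [← e2, ← e3, ← e4]; exact hN 8 2 d8)
    (by rw [← e2, ← e3, ← e4]; exact hN 9 2 d9)
    (by rw [← e2, ← e3, ← e4]; exact hN 10 2 d10)
    (by simp) (by simp) (by simp)
  rw [Fin.lt_def, Fin.lt_def] at R0 R1 R2 ⊢
  rw [Fin.lt_def] at R0 R1 R2 ⊢
  omega

end backward


section forwardsec
variable {p q : ℕ}

lemma mulW_lt {a b r r' W : ℕ} (hab : a < b) (hr : r < W) : a*W + r < b*W + r' :=
  calc a*W + r < a*W + W := by omega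
  _ = (a+1)*W := by ring
  _ ≤ b*W := Nat.mul_le_mul_right _ hab
  _ ≤ b*W + r' := Nat.le_add_right _ _

lemma mulW_le {a b r r' W : ℕ} (h : a*W + r ≤ b*W + r') (hr' : r' < W) : a ≤ b := by
  by_contra hc
  push_neg at hc
  exact absurd (mulW_lt hc hr') (not_lt.2 h)

lemma mulW_eq {a b r r' W : ℕ} (h : a*W + r = b*W + r') (hr : r < W) (hr' : r' < W) :
    a = b ∧ r = r' := by
  have h1 : a ≤ b := mulW_le (le_of_eq h) hr'
  have h2 : b ≤ a := mulW_le (le_of_eq h.symm) hr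
  have hab : a = b := le_antisymm h1 h2
  subst hab
  omega

/-- gap index of the `C`-vertices in the interleaved ordering -/
def slotF (T : Fin q → Fin p × Fin p × Fin p) (π : Fin p ≃ Fin p) (i : Fin q)
    (t : Fin 2) : ℕ :=
  if t = 0 then min (π (T i).1 : ℕ) (π (T i).2.1 : ℕ)
  else min (π (T i).2.1 : ℕ) (π (T i).2.2 : ℕ)

/-- the position key of each vertex in the constructed perfect cancellation ordering -/
def keyF (T : Fin q → Fin p × Fin p × Fin p) (π : Fin p ≃ Fin p) : Vtx p q → ℕ
  | .z i j => 12*(i : ℕ) + (j : ℕ)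
  | .s k => 12*q + (π k : ℕ)*(2*q+2)
  | .u m => 12*q + (m : ℕ)*(2*q+2) + 1
  | .c i t => 12*q + (slotF T π i t)*(2*q+2) + 2 + 2*(i : ℕ) + (t : ℕ)

variable {T : Fin q → Fin p × Fin p × Fin p} {π : Fin p ≃ Fin p}

lemma val_ne_of_ne {k k' : Fin p} (h : k ≠ k') : (π k : ℕ) ≠ (π k' : ℕ) := by
  intro hc
  exact h (π.injective (Fin.ext hc))

lemma rc_lt {i : Fin q} {t : Fin 2} : 2 + 2*(i : ℕ) + (t : ℕ) < 2*q + 2 := by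
  have := i.isLt
  have := t.isLt
  omega

lemma keyF_inj : Function.Injective (keyF T π) := by
  have hW : 2 ≤ 2*q + 2 := by omega
  intro a b h
  cases a with
  | s k =>
    cases b with
    | s k' =>
      simp only [keyF] at h
      have h' : (π k : ℕ)*(2*q+2) = (π k' : ℕ)*(2*q+2) := by omega
      have := Nat.eq_of_mul_eq_mul_right (by omega) h'
      rw [show k = k' from π.injective (Fin.ext this)]
    | c i t =>
      simp only [keyF] at h
      have h' : (π k : ℕ)*(2*q+2) + 0 = (slotF T π i t)*(2*q+2) + (2 + 2*(i:ℕ) + (t:ℕ)) := by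
        omega
      have := (mulW_eq h' (by omega) rc_lt).2
      omega
    | u m =>
      simp only [keyF] at h
      have h' : (π k : ℕ)*(2*q+2) + 0 = (m : ℕ)*(2*q+2) + 1 := by omega
      have := (mulW_eq h' (by omega) (by omega)).2
      omega
    | z i j =>
      simp only [keyF] at h
      have := i.isLt
      have := j.isLt
      omega
  | c i t =>
    cases b with
    | s k' =>
      simp only [keyF] at h
      have h' : (slotF T π i t)*(2*q+2) + (2 + 2*(i:ℕ) + (t:ℕ)) = (π k' : ℕ)*(2*q+2) + 0 := by
        omega
      have := (mulW_eq h' rc_lt (by omega)).2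
      omega
    | c i' t' =>
      simp only [keyF] at h
      have h' : (slotF T π i t)*(2*q+2) + (2 + 2*(i:ℕ) + (t:ℕ)) =
          (slotF T π i' t')*(2*q+2) + (2 + 2*(i':ℕ) + (t':ℕ)) := by omega
      have h2 := (mulW_eq h' rc_lt rc_lt).2
      have ht := t.isLt
      have ht' := t'.isLt
      have hi : (i : ℕ) = (i' : ℕ) := by omega
      have htt : (t : ℕ) = (t' : ℕ) := by omega
      rw [show i = i' from Fin.ext hi, show t = t' from Fin.ext htt]
    | u m =>
      simp only [keyF] at h
      have h' : (slotF T π i t)*(2*q+2) + (2 + 2*(i:ℕ) + (t:ℕ)) = (m : ℕ)*(2*q+2) + 1 := by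
        omega
      have := (mulW_eq h' rc_lt (by omega)).2
      omega
    | z i' j =>
      simp only [keyF] at h
      have := i'.isLt
      have := j.isLt
      omega
  | u m =>
    cases b with
    | s k' =>
      simp only [keyF] at h
      have h' : (m : ℕ)*(2*q+2) + 1 = (π k' : ℕ)*(2*q+2) + 0 := by omega
      have := (mulW_eq h' (by omega) (by omega)).2
      omega
    | c i' t' =>
      simp only [keyF] at h
      have h' : (m : ℕ)*(2*q+2) + 1 = (slotF T π i' t')*(2*q+2) + (2 + 2*(i':ℕ) + (t':ℕ)) := by
        omega
      have := (mulW_eq h' (by omega) rc_lt).2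
      omega
    | u m' =>
      simp only [keyF] at h
      have h' : (m : ℕ)*(2*q+2) = (m' : ℕ)*(2*q+2) := by omega
      have := Nat.eq_of_mul_eq_mul_right (by omega) h'
      rw [show m = m' from Fin.ext this]
    | z i' j =>
      simp only [keyF] at h
      have := i'.isLt
      have := j.isLt
      omega
  | z i j =>
    cases b with
    | s k' =>
      simp only [keyF] at h
      have := i.isLt
      have := j.isLt
      omega
    | c i' t' =>
      simp only [keyF] at h
      have := i.isLt
      have := j.isLt
      omega
    | u m' =>
      simp only [keyF] at h
      have := i.isLt
      have := j.isLt
      omega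
    | z i' j' =>
      simp only [keyF] at h
      have := j.isLt
      have := j'.isLt
      have hi : (i : ℕ) = (i' : ℕ) := by omega
      have hj : (j : ℕ) = (j' : ℕ) := by omega
      rw [show i = i' from Fin.ext hi, show j = j' from Fin.ext hj]


lemma fin2_cases (t : Fin 2) : t = 0 ∨ t = 1 := by
  rcases t with ⟨tv, h⟩
  interval_cases tv
  · exact Or.inl rfl
  · exact Or.inr rfl

/-- `y` lies strictly between `x` and `z` -/
abbrev NatBtw (x y z : ℕ) : Prop := (x < y ∧ y < z) ∨ (z < y ∧ y < x)

section keyOrder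
variable (hT : ∀ i : Fin q,
      (T i).1 ≠ (T i).2.1 ∧ (T i).1 ≠ (T i).2.2 ∧ (T i).2.1 ≠ (T i).2.2)
variable (hbtw : ∀ i : Fin q,
        (π (T i).1 < π (T i).2.1 ∧ π (T i).2.1 < π (T i).2.2) ∨
        (π (T i).2.2 < π (T i).2.1 ∧ π (T i).2.1 < π (T i).1))

lemma slotF_zero (i : Fin q) :
    slotF T π i 0 = min (π (T i).1 : ℕ) (π (T i).2.1 : ℕ) := rfl

lemma slotF_one (i : Fin q) :
    slotF T π i 1 = min (π (T i).2.1 : ℕ) (π (T i).2.2 : ℕ) := by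
  simp [slotF]

include hT in
lemma slotF_add_lt (i : Fin q) (t : Fin 2) : slotF T π i t + 1 < p := by
  obtain ⟨h1, h2, h3⟩ := hT i
  have e1 := (π (T i).1).isLt
  have e2 := (π (T i).2.1).isLt
  have e3 := (π (T i).2.2).isLt
  have d1 := val_ne_of_ne (π := π) h1
  have d3 := val_ne_of_ne (π := π) h3
  rcases (fin2_cases t) with rfl | rfl
  · rw [slotF_zero]; omega
  · rw [slotF_one]; omega

include hbtw in
lemma slotF_ne (i : Fin q) : slotF T π i 0 ≠ slotF T π i 1 := by
  rw [slotF_zero, slotF_one]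
  rcases hbtw i with ⟨h1, h2⟩ | ⟨h1, h2⟩ <;>
    [ (have m1 : (π (T i).1 : ℕ) < (π (T i).2.1 : ℕ) := h1;
       have m2 : (π (T i).2.1 : ℕ) < (π (T i).2.2 : ℕ) := h2);
      (have m1 : (π (T i).2.2 : ℕ) < (π (T i).2.1 : ℕ) := h1;
       have m2 : (π (T i).2.1 : ℕ) < (π (T i).1 : ℕ) := h2)] <;>
    omega

include hT in
lemma key_btw0 (i : Fin q) :
    NatBtw (keyF T π (.s (T i).1)) (keyF T π (.c i 0)) (keyF T π (.s (T i).2.1)) := by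
  have hd : (π (T i).1 : ℕ) ≠ (π (T i).2.1 : ℕ) := val_ne_of_ne (hT i).1
  simp only [keyF, slotF_zero, NatBtw, Fin.val_zero]
  rcases hd.lt_or_gt with h | h
  · rw [Nat.min_eq_left h.le]
    have hm := mulW_lt (r := 2 + 2*(i:ℕ) + 0) (r' := 0) (W := 2*q+2) h
      (by have := i.isLt; omega)
    left
    omega
  · rw [Nat.min_eq_right h.le]
    have hm := mulW_lt (r := 2 + 2*(i:ℕ) + 0) (r' := 0) (W := 2*q+2) h
      (by have := i.isLt; omega)
    right
    omega

include hT in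
lemma key_btw2 (i : Fin q) :
    NatBtw (keyF T π (.s (T i).2.1)) (keyF T π (.c i 1)) (keyF T π (.s (T i).2.2)) := by
  have hd : (π (T i).2.1 : ℕ) ≠ (π (T i).2.2 : ℕ) := val_ne_of_ne (hT i).2.2
  simp only [keyF, slotF_one, NatBtw, Fin.val_one]
  rcases hd.lt_or_gt with h | h
  · rw [Nat.min_eq_left h.le]
    have hm := mulW_lt (r := 2 + 2*(i:ℕ) + 1) (r' := 0) (W := 2*q+2) h
      (by have := i.isLt; omega)
    left
    omega
  · rw [Nat.min_eq_right h.le]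
    have hm := mulW_lt (r := 2 + 2*(i:ℕ) + 1) (r' := 0) (W := 2*q+2) h
      (by have := i.isLt; omega)
    right
    omega

include hbtw in
lemma key_btw1 (i : Fin q) :
    NatBtw (keyF T π (.c i 0)) (keyF T π (.s (T i).2.1)) (keyF T π (.c i 1)) := by
  simp only [keyF, slotF_zero, slotF_one, NatBtw, Fin.val_zero, Fin.val_one]
  rcases hbtw i with ⟨h1, h2⟩ | ⟨h1, h2⟩
  · have m1 : (π (T i).1 : ℕ) < (π (T i).2.1 : ℕ) := h1
    have m2 : (π (T i).2.1 : ℕ) < (π (T i).2.2 : ℕ) := h2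
    rw [Nat.min_eq_left m1.le, Nat.min_eq_left m2.le]
    have hm := mulW_lt (r := 2 + 2*(i:ℕ) + 0) (r' := 0) (W := 2*q+2) m1
      (by have := i.isLt; omega)
    left
    omega
  · have m1 : (π (T i).2.2 : ℕ) < (π (T i).2.1 : ℕ) := h1
    have m2 : (π (T i).2.1 : ℕ) < (π (T i).1 : ℕ) := h2
    rw [Nat.min_eq_right m2.le, Nat.min_eq_right m1.le]
    have hm := mulW_lt (r := 2 + 2*(i:ℕ) + 1) (r' := 0) (W := 2*q+2) m1
      (by have := i.isLt; omega)
    right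
    omega

lemma wit_ss {k k' : Fin p} (h : keyF T π (.s k) < keyF T π (.s k')) :
    keyF T π (.s k) < keyF T π (.u (π k)) ∧ keyF T π (.u (π k)) < keyF T π (.s k') := by
  simp only [keyF] at h ⊢
  have h' : (π k : ℕ)*(2*q+2) < (π k' : ℕ)*(2*q+2) := by omega
  have hlt : (π k : ℕ) < (π k' : ℕ) := lt_of_mul_lt_mul_right h' (Nat.zero_le _)
  have hm := mulW_lt (r := 1) (r' := 0) (W := 2*q+2) hlt (by omega)
  omega

include hT hbtw in
lemma wit_cc {i : Fin q} {t t' : Fin 2} (hne : t ≠ t')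
    (h : keyF T π (.c i t) < keyF T π (.c i t')) :
    ∃ m : Fin p, keyF T π (.c i t) < keyF T π (.u m) ∧
      keyF T π (.u m) < keyF T π (.c i t') := by
  have hsne : slotF T π i t ≠ slotF T π i t' := by
    rcases (fin2_cases t) with rfl | rfl <;>
      rcases (fin2_cases t') with rfl | rfl
    · exact absurd rfl hne
    · exact slotF_ne hbtw i
    · exact (slotF_ne hbtw i).symm
    · exact absurd rfl hne
  have hrt : 2 + 2*(i:ℕ) + (t:ℕ) < 2*q+2 := rc_lt
  have hrt' : 2 + 2*(i:ℕ) + (t':ℕ) < 2*q+2 := rc_lt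
  simp only [keyF] at h ⊢
  have h' : (slotF T π i t)*(2*q+2) + (2 + 2*(i:ℕ) + (t:ℕ)) ≤
      (slotF T π i t')*(2*q+2) + (2 + 2*(i:ℕ) + (t':ℕ)) := by omega
  have hle : slotF T π i t ≤ slotF T π i t' := mulW_le h' hrt'
  have hlt : slotF T π i t < slotF T π i t' := lt_of_le_of_ne hle hsne
  refine ⟨⟨slotF T π i t + 1, slotF_add_lt hT i t⟩, ?_, ?_⟩
  · simp only [Fin.val_mk]
    have he : (slotF T π i t + 1)*(2*q+2) = (slotF T π i t)*(2*q+2) + (2*q+2) := by ring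
    omega
  · simp only [Fin.val_mk]
    have he := Nat.mul_le_mul_right (2*q+2) (show slotF T π i t + 1 ≤ slotF T π i t' from hlt)
    omega

lemma key_z_lt_base (i : Fin q) (j : Fin 12) : keyF T π (.z i j) < 12*q := by
  simp only [keyF]
  have := i.isLt
  have := j.isLt
  omega

lemma key_s_ge (k : Fin p) : 12*q ≤ keyF T π (.s k) := by simp only [keyF]; omega
lemma key_u_ge (m : Fin p) : 12*q ≤ keyF T π (.u m) := by simp only [keyF]; omega
lemma key_c_ge (i : Fin q) (t : Fin 2) : 12*q ≤ keyF T π (.c i t) := by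
  simp only [keyF]; omega

end keyOrder

end forwardsec


section forwardmain
variable {p q : ℕ} {T : Fin q → Fin p × Fin p × Fin p} {π : Fin p ≃ Fin p}

lemma forward_pcg
    (hT : ∀ i : Fin q,
      (T i).1 ≠ (T i).2.1 ∧ (T i).1 ≠ (T i).2.2 ∧ (T i).2.1 ≠ (T i).2.2)
    (hbtw : ∀ i : Fin q,
        (π (T i).1 < π (T i).2.1 ∧ π (T i).2.1 < π (T i).2.2) ∨
        (π (T i).2.2 < π (T i).2.1 ∧ π (T i).2.1 < π (T i).1)) :
    PerfectCancellationGraph (SimpleGraph.fromRel (baseRel T)) := by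
  classical
  letI : LinearOrder (Vtx p q) := LinearOrder.lift' (keyF T π) keyF_inj
  let σo : Fin (Fintype.card (Vtx p q)) ≃o Vtx p q :=
    Fintype.orderIsoFinOfCardEq (Vtx p q) rfl
  let σ : Vtx p q ≃ Fin (Fintype.card (Vtx p q)) := σo.symm.toEquiv
  have hσ : ∀ a b : Vtx p q, σ a < σ b ↔ keyF T π a < keyF T π b := by
    intro a b
    have h1 : σ a < σ b ↔ a < b := σo.symm.lt_iff_lt
    rw [h1]
    rw [lt_iff_le_not_ge, Nat.lt_iff_le_not_le]
    exact Iff.rfl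
  refine ⟨σ, isPCO_of_strong _ σ ?_⟩
  intro v a b hva hvb h1 h2 hnadj
  rw [hσ] at h1 h2
  cases v with
  | z i j =>
    have ha := adj_z_iff.1 hva
    have hb := adj_z_iff.1 hvb
    have hglt : (j : ℕ) < 12 := j.isLt
    have hg : (j:ℕ)/4 = 0 ∨ (j:ℕ)/4 = 1 ∨ (j:ℕ)/4 = 2 := by omega
    rcases hg with hg | hg | hg
    · rw [hg, show pathV T i 0 = Vtx.s (T i).1 from rfl,
          show pathV T i (0+1) = Vtx.c i 0 from rfl,
          show pathV T i (0+2) = Vtx.s (T i).2.1 from rfl] at ha hb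
      have hB := key_btw0 (π := π) hT i
      rcases ha with rfl | rfl | rfl <;> rcases hb with rfl | rfl | rfl
      · exact absurd h2 (lt_irrefl _)
      · exact absurd adj_sc hnadj
      · refine ⟨Vtx.c i 0, adj_z_iff.2 (Or.inr (Or.inl (by rw [hg]; rfl))), adj_sc,
          (hσ _ _).2 ?_, (hσ _ _).2 ?_⟩ <;>
          (rcases hB with ⟨u1, u2⟩ | ⟨u1, u2⟩ <;> omega)
      · exact absurd adj_sc.symm hnadj
      · exact absurd h2 (lt_irrefl _)
      · exact absurd adj_sc.symm hnadj
      · refine ⟨Vtx.c i 0, adj_z_iff.2 (Or.inr (Or.inl (by rw [hg]; rfl))), adj_sc,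
          (hσ _ _).2 ?_, (hσ _ _).2 ?_⟩ <;>
          (rcases hB with ⟨u1, u2⟩ | ⟨u1, u2⟩ <;> omega)
      · exact absurd adj_sc hnadj
      · exact absurd h2 (lt_irrefl _)
    · rw [hg, show pathV T i 1 = Vtx.c i 0 from rfl,
          show pathV T i (1+1) = Vtx.s (T i).2.1 from rfl,
          show pathV T i (1+2) = Vtx.c i 1 from rfl] at ha hb
      have hB := key_btw1 (T := T) hbtw i
      rcases ha with rfl | rfl | rfl <;> rcases hb with rfl | rfl | rfl
      · exact absurd h2 (lt_irrefl _)
      · exact absurd adj_sc.symm hnadj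
      · refine ⟨Vtx.s (T i).2.1, adj_z_iff.2 (Or.inr (Or.inl (by rw [hg]; rfl))), adj_sc.symm,
          (hσ _ _).2 ?_, (hσ _ _).2 ?_⟩ <;>
          (rcases hB with ⟨u1, u2⟩ | ⟨u1, u2⟩ <;> omega)
      · exact absurd adj_sc hnadj
      · exact absurd h2 (lt_irrefl _)
      · exact absurd adj_sc hnadj
      · refine ⟨Vtx.s (T i).2.1, adj_z_iff.2 (Or.inr (Or.inl (by rw [hg]; rfl))), adj_sc.symm,
          (hσ _ _).2 ?_, (hσ _ _).2 ?_⟩ <;>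
          (rcases hB with ⟨u1, u2⟩ | ⟨u1, u2⟩ <;> omega)
      · exact absurd adj_sc.symm hnadj
      · exact absurd h2 (lt_irrefl _)
    · rw [hg, show pathV T i 2 = Vtx.s (T i).2.1 from rfl,
          show pathV T i (2+1) = Vtx.c i 1 from rfl,
          show pathV T i (2+2) = Vtx.s (T i).2.2 from rfl] at ha hb
      have hB := key_btw2 (π := π) hT i
      rcases ha with rfl | rfl | rfl <;> rcases hb with rfl | rfl | rfl
      · exact absurd h2 (lt_irrefl _)
      · exact absurd adj_sc hnadj
      · refine ⟨Vtx.c i 1, adj_z_iff.2 (Or.inr (Or.inl (by rw [hg]; rfl))), adj_sc,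
          (hσ _ _).2 ?_, (hσ _ _).2 ?_⟩ <;>
          (rcases hB with ⟨u1, u2⟩ | ⟨u1, u2⟩ <;> omega)
      · exact absurd adj_sc.symm hnadj
      · exact absurd h2 (lt_irrefl _)
      · exact absurd adj_sc.symm hnadj
      · refine ⟨Vtx.c i 1, adj_z_iff.2 (Or.inr (Or.inl (by rw [hg]; rfl))), adj_sc,
          (hσ _ _).2 ?_, (hσ _ _).2 ?_⟩ <;>
          (rcases hB with ⟨u1, u2⟩ | ⟨u1, u2⟩ <;> omega)
      · exact absurd adj_sc hnadj
      · exact absurd h2 (lt_irrefl _)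
  | s k =>
    cases a with
    | z i j =>
      exact absurd h1 (by
        have := key_z_lt_base (T := T) (π := π) i j
        have := key_s_ge (T := T) (π := π) k
        omega)
    | s k' =>
      cases b with
      | z i j =>
        exact absurd h2 (by
          have := key_z_lt_base (T := T) (π := π) i j
          have := key_s_ge (T := T) (π := π) k'
          omega)
      | s k'' =>
        obtain ⟨w1, w2⟩ := wit_ss (π := π) h2
        exact ⟨Vtx.u (π k'), adj_us.symm, adj_us.symm, (hσ _ _).2 w1, (hσ _ _).2 w2⟩
      | c i t => exact absurd adj_sc hnadj
      | u m => exact absurd adj_us.symm hnadj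
    | u m' =>
      cases b with
      | z i j =>
        exact absurd h2 (by
          have := key_z_lt_base (T := T) (π := π) i j
          have := key_u_ge (T := T) (π := π) m'
          omega)
      | s k'' => exact absurd adj_us hnadj
      | u m'' =>
        exact absurd (adj_uu (fun e => by rw [e] at h2; exact lt_irrefl _ h2)) hnadj
      | c i t => exact absurd adj_uc hnadj
    | c i t =>
      cases b with
      | z i' j =>
        exact absurd h2 (by
          have := key_z_lt_base (T := T) (π := π) i' j
          have := key_c_ge (T := T) (π := π) i t
          omega)
      | s k'' => exact absurd adj_sc.symm hnadj
      | u m => exact absurd adj_uc.symm hnadj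
      | c i' t' =>
        have hi : i = i' := by
          by_contra hne
          exact hnadj (adj_cc hne)
        subst hi
        have htne : t ≠ t' := fun e => by rw [e] at h2; exact lt_irrefl _ h2
        obtain ⟨m, w1, w2⟩ := wit_cc hT hbtw htne h2
        exact ⟨Vtx.u m, adj_us.symm, adj_uc.symm, (hσ _ _).2 w1, (hσ _ _).2 w2⟩
  | u mm =>
    cases a with
    | z i j =>
      exact absurd h1 (by
        have := key_z_lt_base (T := T) (π := π) i j
        have := key_u_ge (T := T) (π := π) mm
        omega)
    | s k' =>
      cases b with
      | z i j =>
        exact absurd h2 (by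
          have := key_z_lt_base (T := T) (π := π) i j
          have := key_s_ge (T := T) (π := π) k'
          omega)
      | s k'' =>
        obtain ⟨w1, w2⟩ := wit_ss (π := π) h2
        have hne : mm ≠ π k' := fun e => by
          rw [e] at h1
          exact absurd (h1.trans w1) (lt_irrefl _)
        exact ⟨Vtx.u (π k'), adj_uu hne, adj_us.symm, (hσ _ _).2 w1, (hσ _ _).2 w2⟩
      | c i t => exact absurd adj_sc hnadj
      | u m => exact absurd adj_us.symm hnadj
    | u m' =>
      cases b with
      | z i j =>
        exact absurd h2 (by
          have := key_z_lt_base (T := T) (π := π) i j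
          have := key_u_ge (T := T) (π := π) m'
          omega)
      | s k'' => exact absurd adj_us hnadj
      | u m'' =>
        exact absurd (adj_uu (fun e => by rw [e] at h2; exact lt_irrefl _ h2)) hnadj
      | c i t => exact absurd adj_uc hnadj
    | c i t =>
      cases b with
      | z i' j =>
        exact absurd h2 (by
          have := key_z_lt_base (T := T) (π := π) i' j
          have := key_c_ge (T := T) (π := π) i t
          omega)
      | s k'' => exact absurd adj_sc.symm hnadj
      | u m => exact absurd adj_uc.symm hnadj
      | c i' t' =>
        have hi : i = i' := by
          by_contra hne
          exact hnadj (adj_cc hne)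
        subst hi
        have htne : t ≠ t' := fun e => by rw [e] at h2; exact lt_irrefl _ h2
        obtain ⟨m, w1, w2⟩ := wit_cc hT hbtw htne h2
        have hne : mm ≠ m := fun e => by
          rw [e] at h1
          exact absurd (h1.trans w1) (lt_irrefl _)
        exact ⟨Vtx.u m, adj_uu hne, adj_uc.symm, (hσ _ _).2 w1, (hσ _ _).2 w2⟩
  | c ii tt =>
    cases a with
    | z i j =>
      exact absurd h1 (by
        have := key_z_lt_base (T := T) (π := π) i j
        have := key_c_ge (T := T) (π := π) ii tt
        omega)
    | s k' =>
      cases b with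
      | z i j =>
        exact absurd h2 (by
          have := key_z_lt_base (T := T) (π := π) i j
          have := key_s_ge (T := T) (π := π) k'
          omega)
      | s k'' =>
        obtain ⟨w1, w2⟩ := wit_ss (π := π) h2
        exact ⟨Vtx.u (π k'), adj_uc.symm, adj_us.symm, (hσ _ _).2 w1, (hσ _ _).2 w2⟩
      | c i t => exact absurd adj_sc hnadj
      | u m => exact absurd adj_us.symm hnadj
    | u m' =>
      cases b with
      | z i j =>
        exact absurd h2 (by
          have := key_z_lt_base (T := T) (π := π) i j
          have := key_u_ge (T := T) (π := π) m'
          omega)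
      | s k'' => exact absurd adj_us hnadj
      | u m'' =>
        exact absurd (adj_uu (fun e => by rw [e] at h2; exact lt_irrefl _ h2)) hnadj
      | c i t => exact absurd adj_uc hnadj
    | c i t =>
      cases b with
      | z i' j =>
        exact absurd h2 (by
          have := key_z_lt_base (T := T) (π := π) i' j
          have := key_c_ge (T := T) (π := π) i t
          omega)
      | s k'' => exact absurd adj_sc.symm hnadj
      | u m => exact absurd adj_uc.symm hnadj
      | c i' t' =>
        have hi : i = i' := by
          by_contra hne
          exact hnadj (adj_cc hne)
        subst hi
        have htne : t ≠ t' := fun e => by rw [e] at h2; exact lt_irrefl _ h2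
        obtain ⟨m, w1, w2⟩ := wit_cc hT hbtw htne h2
        exact ⟨Vtx.u m, adj_uc.symm, adj_uc.symm, (hσ _ _).2 w1, (hσ _ _).2 w2⟩

end forwardmain

/-- `G(S, T)` is a perfect cancellation graph iff the betweenness instance `(S, T)` is
satisfiable: there is a linear order `π` on `S = Fin p` such that every triple of `T`
appears either in order or in reverse order. -/
theorem stmt5 (p q : ℕ) (T : Fin q → Fin p × Fin p × Fin p)
    (hT : ∀ i : Fin q,
      (T i).1 ≠ (T i).2.1 ∧ (T i).1 ≠ (T i).2.2 ∧ (T i).2.1 ≠ (T i).2.2) :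
    PerfectCancellationGraph (SimpleGraph.fromRel (baseRel T)) ↔
      ∃ π : Fin p ≃ Fin p, ∀ i : Fin q,
        (π (T i).1 < π (T i).2.1 ∧ π (T i).2.1 < π (T i).2.2) ∨
        (π (T i).2.2 < π (T i).2.1 ∧ π (T i).2.1 < π (T i).1) := by
  constructor
  · rintro ⟨σ, hP⟩
    classical
    set f : Fin p → Fin (Fintype.card (Vtx p q)) := fun k => σ (Vtx.s k) with hf
    have hfinj : Function.Injective f := by
      intro a b h
      have h2 := σ.injective h
      injection h2
    set Simg : Finset (Fin (Fintype.card (Vtx p q))) := Finset.univ.image f with hSimg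
    have hcard : Simg.card = p := by
      rw [hSimg, Finset.card_image_of_injective _ hfinj, Finset.card_univ, Fintype.card_fin]
    set oi := Simg.orderIsoOfFin hcard with hoi
    have hbij : Function.Bijective
        (fun k => (⟨f k, Finset.mem_image_of_mem f (Finset.mem_univ k)⟩ : Simg)) := by
      rw [Fintype.bijective_iff_injective_and_card]
      constructor
      · intro a b h
        exact hfinj (congrArg Subtype.val h)
      · rw [Fintype.card_coe, hcard, Fintype.card_fin]
    set e : Fin p ≃ Simg := Equiv.ofBijective _ hbij with he
    set π : Fin p ≃ Fin p := e.trans oi.toEquiv.symm with hπdef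
    have hπ : ∀ k k' : Fin p, π k < π k' ↔ σ (Vtx.s k) < σ (Vtx.s k') := by
      intro k k'
      rw [show π k = oi.symm (e k) from rfl, show π k' = oi.symm (e k') from rfl,
        oi.symm.lt_iff_lt]
      exact (Subtype.coe_lt_coe (p := fun x => x ∈ Simg) (x := e k) (y := e k')).symm
    refine ⟨π, fun i => ?_⟩
    rcases backward_btw hP hT i with ⟨hb1, hb2⟩ | ⟨hb1, hb2⟩
    · exact Or.inl ⟨(hπ _ _).2 hb1, (hπ _ _).2 hb2⟩
    · exact Or.inr ⟨(hπ _ _).2 hb1, (hπ _ _).2 hb2⟩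
  · rintro ⟨π, hbtw⟩
    exact forward_pcg hT hbtw
end Blemmas
end

section
/- Let G be a finite simple graph with m edges containing no cycle of length three and no cycle of length four (girth at least five). Then every graphic parity network for G has size at least 7m/6; that is, 6 times the size of any graphic parity network for G is at least 7m. -/
/-!
Every edge `e` of `G` is created by some gate (its target becomes `e`) and destroyed by some
gate (its target held `e`); distinct edges give distinct creating and distinct destroying gates.
With `m` edges and `N` gates, at least `2m - N` gates, the reused ones, destroy an edge `e` and
create an edge `e' ≠ e`, so their control term is `e ∆ e'`, which some earlier gate wrote. When
`G` has girth at least five, `e ∆ e'` is never an edge, so that earlier gate creates no edge, and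
`e ∆ e'` determines the pair `{e, e'}`, so at most two reused gates share a control term. With
`r` reused gates this gives `m + r / 2 ≤ N` besides `2m - r ≤ N`, hence `4m ≤ 3N`.
-/

open Finset
open scoped symmDiff

namespace Sym2

variable {V : Type*} [DecidableEq V]

lemma toFinset_injective : Function.Injective (Sym2.toFinset : Sym2 V → Finset V) :=
  fun e f h => Sym2.ext fun x => by rw [← Sym2.mem_toFinset, h, Sym2.mem_toFinset]

lemma toFinset_symmDiff_ne_singleton {e f : Sym2 V} (he : ¬e.IsDiag)
    (hf : ¬f.IsDiag) (z : V) : e.toFinset ∆ f.toFinset ≠ {z} := by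
  induction e using Sym2.ind with | _ a b =>
  induction f using Sym2.ind with | _ c d =>
  intro h
  have := congrArg (a ∈ ·) h; have := congrArg (b ∈ ·) h; have := congrArg (c ∈ ·) h
  have := congrArg (d ∈ ·) h; have := congrArg (z ∈ ·) h
  simp only [Sym2.toFinset_mk_eq, Sym2.mk_isDiag_iff, mem_symmDiff, mem_insert,
    mem_singleton] at *
  grind

end Sym2

namespace SimpleGraph

variable {V : Type*} {G : SimpleGraph V}

lemma not_adj_of_five_le_girth (hG : 5 ≤ G.girth) {a b c : V} (hab : G.Adj a b)
    (hbc : G.Adj b c) : ¬G.Adj c a := by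
  intro hca
  have hcycle : (Walk.cons hab (.cons hbc (.cons hca .nil))).IsCycle := by
    simp [Walk.cons_isCycle_iff, hab.ne, hbc.ne, hca.ne, hab.ne', hca.ne']
  have := hG.trans (girth_le_length hcycle)
  simp at this

lemma eq_of_adj_of_adj_of_five_le_girth (hG : 5 ≤ G.girth) {u u' x y : V} (hux : G.Adj u x)
    (huy : G.Adj u y) (hu'x : G.Adj u' x) (hu'y : G.Adj u' y) (hxy : x ≠ y) : u = u' := by
  by_contra huu'
  have hcycle : (Walk.cons hux (.cons hu'x.symm (.cons hu'y (.cons huy.symm .nil)))).IsCycle := by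
    simp [Walk.cons_isCycle_iff, hux.ne, huy.ne, hu'y.ne, hux.ne', huy.ne', hu'x.ne', huu',
      Ne.symm huu', hxy]
  have := hG.trans (girth_le_length hcycle)
  simp at this

variable [DecidableEq V]

lemma toFinset_symmDiff_ne_toFinset (hG : 5 ≤ G.girth) {e f g : Sym2 V} (he : e ∈ G.edgeSet)
    (hf : f ∈ G.edgeSet) (hg : g ∈ G.edgeSet) : e.toFinset ∆ f.toFinset ≠ g.toFinset := by
  have tri : ∀ {a b c : V}, G.Adj a b → G.Adj b c → ¬G.Adj c a :=
    not_adj_of_five_le_girth hG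
  induction e using Sym2.ind with | _ a b =>
  induction f using Sym2.ind with | _ c d =>
  induction g using Sym2.ind with | _ x y =>
  intro h
  have := congrArg (a ∈ ·) h; have := congrArg (b ∈ ·) h; have := congrArg (c ∈ ·) h
  have := congrArg (d ∈ ·) h; have := congrArg (x ∈ ·) h; have := congrArg (y ∈ ·) h
  simp only [Sym2.toFinset_mk_eq, mem_edgeSet, mem_symmDiff, mem_insert, mem_singleton] at *
  grind [SimpleGraph.irrefl, Adj.symm]

lemma eq_or_eq_of_toFinset_symmDiff_eq_of_mem (hG : 5 ≤ G.girth) {e₁ e₂ e₃ e₄ : Sym2 V}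
    (h₁ : e₁ ∈ G.edgeSet) (h₂ : e₂ ∈ G.edgeSet) (h₃ : e₃ ∈ G.edgeSet) (h₄ : e₄ ∈ G.edgeSet)
    {v : V} (hv₁ : v ∈ e₁) (hv₂ : v ∈ e₂) (h₁₂ : e₁ ≠ e₂)
    (h : e₁.toFinset ∆ e₂.toFinset = e₃.toFinset ∆ e₄.toFinset) : e₁ = e₃ ∨ e₁ = e₄ := by
  have uniq : ∀ {u u' x y : V}, G.Adj u x → G.Adj u y → G.Adj u' x → G.Adj u' y → x ≠ y →
      u = u' := eq_of_adj_of_adj_of_five_le_girth hG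
  obtain ⟨x, rfl⟩ := Sym2.mem_iff_exists.1 hv₁
  obtain ⟨y, rfl⟩ := Sym2.mem_iff_exists.1 hv₂
  clear hv₁ hv₂
  rw [mem_edgeSet] at h₁ h₂
  have hxy : x ≠ y := by rintro rfl; exact h₁₂ rfl
  have hvx := h₁.ne
  have hvy := h₂.ne
  have hS : s(v, x).toFinset ∆ s(v, y).toFinset = {x, y} := by
    ext z
    simp only [Sym2.toFinset_mk_eq, mem_symmDiff, mem_insert, mem_singleton]
    grind
  rw [hS] at h
  -- `e₃ ∆ e₄ = {x, y}` makes `e₃`, `e₄` meet in a common neighbour of `x` and `y`, i.e. in `v`.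
  induction e₃ using Sym2.ind with | _ a b =>
  induction e₄ using Sym2.ind with | _ c d =>
  simp only [mem_edgeSet, Sym2.eq_iff, Sym2.toFinset_mk_eq, Finset.ext_iff, mem_symmDiff,
    mem_insert, mem_singleton] at h₃ h₄ h ⊢
  have := h a; have := h b; have := h c; have := h d; have := h x; have := h y
  grind [SimpleGraph.irrefl, Adj.symm]

lemma eq_or_eq_of_toFinset_symmDiff_eq (hG : 5 ≤ G.girth) {e₁ e₂ e₃ e₄ : Sym2 V}
    (h₁ : e₁ ∈ G.edgeSet) (h₂ : e₂ ∈ G.edgeSet) (h₃ : e₃ ∈ G.edgeSet) (h₄ : e₄ ∈ G.edgeSet)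
    (h₁₂ : e₁ ≠ e₂) (h : e₁.toFinset ∆ e₂.toFinset = e₃.toFinset ∆ e₄.toFinset) :
    e₁ = e₃ ∨ e₁ = e₄ := by
  obtain ⟨v, hv₁⟩ : ∃ v, v ∈ e₁ := ⟨_, Sym2.out_fst_mem e₁⟩
  by_cases hv₂ : v ∈ e₂
  · exact eq_or_eq_of_toFinset_symmDiff_eq_of_mem hG h₁ h₂ h₃ h₄ hv₁ hv₂ h₁₂ h
  wlog hv₃ : v ∈ e₃ generalizing e₃ e₄
  · refine (this h₄ h₃ (by rw [h, symmDiff_comm]) ?_).symm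
    have hv : v ∈ e₁.toFinset ∆ e₂.toFinset := by simp [mem_symmDiff, hv₁, hv₂]
    rw [h, mem_symmDiff] at hv
    simpa [hv₃] using hv
  by_cases h₁₃ : e₁ = e₃
  · exact Or.inl h₁₃
  -- Exchanging `e₂` and `e₃` leads back to two edges sharing `v`.
  have h' : e₁.toFinset ∆ e₃.toFinset = e₂.toFinset ∆ e₄.toFinset := by
    rw [← symmDiff_eq_bot, symmDiff_symmDiff_symmDiff_comm, h, symmDiff_self]
  exact .inr <|
    (eq_or_eq_of_toFinset_symmDiff_eq_of_mem hG h₁ h₃ h₂ h₄ hv₁ hv₃ h₁₃ h').resolve_left h₁₂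

end SimpleGraph

section Circuit

variable {V : Type*} [DecidableEq V] (C : List (V × V))

def stateAfter (k : ℕ) : V → Finset V := runCircuit (C.take k)

def controlTerm (g : Fin C.length) : Finset V := stateAfter C g C[g].1

def targetBefore (g : Fin C.length) : Finset V := stateAfter C g C[g].2

def targetAfter (g : Fin C.length) : Finset V := stateAfter C (g + 1) C[g].2

variable {C}

@[simp] lemma stateAfter_zero (w : V) : stateAfter C 0 w = {w} := rfl

lemma stateAfter_of_length_le {k : ℕ} (hk : C.length ≤ k) : stateAfter C k = runCircuit C := by
  rw [stateAfter, List.take_of_length_le hk]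

lemma stateAfter_succ (g : Fin C.length) :
    stateAfter C (g + 1) = applyGate C[g] (stateAfter C g) := by
  rw [stateAfter, stateAfter, runCircuit, runCircuit, List.take_add_one,
    List.getElem?_eq_getElem g.isLt, Option.toList_some, List.foldl_append, List.foldl_cons,
    List.foldl_nil]
  rfl

lemma controlTerm_eq (g : Fin C.length) :
    controlTerm C g = targetAfter C g ∆ targetBefore C g := by
  simp [controlTerm, targetAfter, targetBefore, stateAfter_succ, applyGate]

lemma exists_eq_of_stateAfter_succ_ne {k : ℕ} {w : V}
    (h : stateAfter C (k + 1) w ≠ stateAfter C k w) :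
    ∃ g : Fin C.length, (g : ℕ) = k ∧ C[g].2 = w := by
  by_cases hk : k < C.length
  · refine ⟨⟨k, hk⟩, rfl, ?_⟩
    by_contra hw
    apply h
    rw [stateAfter_succ ⟨k, hk⟩, applyGate]
    exact if_neg (Ne.symm hw)
  · rw [stateAfter_of_length_le (by omega), stateAfter_of_length_le (by omega)] at h
    exact absurd rfl h

lemma exists_gate_not_and_succ {P : Finset V → Prop} {w : V} {i j : ℕ} (hij : i ≤ j)
    (hi : ¬P (stateAfter C i w)) (hj : P (stateAfter C j w)) :
    ∃ g : Fin C.length, C[g].2 = w ∧ ¬P (stateAfter C g w) ∧ P (stateAfter C (g + 1) w) := by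
  obtain ⟨n, hn, hn'⟩ := Nat.exists_not_and_succ_of_not_zero_of_exists
    (p := fun n => P (stateAfter C (i + n) w)) hi ⟨j - i, by rwa [Nat.add_sub_cancel' hij]⟩
  obtain ⟨g, hg, hgw⟩ := exists_eq_of_stateAfter_succ_ne (C := C) (k := i + n) (w := w)
    fun h => hn (h ▸ hn')
  exact ⟨g, hgw, hg ▸ hn, hg ▸ hn'⟩

lemma exists_targetAfter_eq {k : ℕ} {w : V} (h : stateAfter C k w ≠ {w}) :
    ∃ g : Fin C.length, targetAfter C g = stateAfter C k w ∧
      targetBefore C g ≠ stateAfter C k w := by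
  obtain ⟨g, rfl, hg, hg'⟩ :=
    exists_gate_not_and_succ (P := (· = stateAfter C k w)) (Nat.zero_le k) (Ne.symm h) rfl
  exact ⟨g, hg', hg⟩

lemma exists_targetBefore_eq {k : ℕ} {w : V} (hC : runCircuit C w = {w})
    (h : stateAfter C k w ≠ {w}) : ∃ g : Fin C.length, targetBefore C g = stateAfter C k w := by
  by_cases hk : k ≤ C.length
  · obtain ⟨g, rfl, hg, -⟩ := exists_gate_not_and_succ (P := (· ≠ stateAfter C k w)) hk
      (not_not.2 rfl) (by rwa [stateAfter_of_length_le le_rfl, hC, ne_comm])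
    exact ⟨g, not_not.1 hg⟩
  · rw [stateAfter_of_length_le (by omega), hC] at h
    exact absurd rfl h

end Circuit

section Network

open SimpleGraph

variable {V : Type*} [DecidableEq V] {G : SimpleGraph V} {C : List (V × V)}

structure EdgeGates (G : SimpleGraph V) (C : List (V × V)) where
  create : G.edgeSet → Fin C.length
  destroy : G.edgeSet → Fin C.length
  targetAfter_create (e : G.edgeSet) : targetAfter C (create e) = e.1.toFinset
  targetBefore_create_ne (e : G.edgeSet) : targetBefore C (create e) ≠ e.1.toFinset
  targetBefore_destroy (e : G.edgeSet) : targetBefore C (destroy e) = e.1.toFinset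

lemma IsGPN.nonempty_edgeGates (h : IsGPN G C) : Nonempty (EdgeGates G C) := by
  have appears : ∀ e : G.edgeSet, ∃ k w, stateAfter C k w = e.1.toFinset ∧
      stateAfter C k w ≠ {w} := by
    rintro ⟨e, he⟩
    induction e using Sym2.ind with | _ u v =>
    obtain ⟨k, w, hk⟩ := h.2.1 u v he
    refine ⟨k, w, by rw [Sym2.toFinset_mk_eq]; exact hk, fun hw => ?_⟩
    have := congrArg card (hk.symm.trans hw)
    rw [card_pair (G.ne_of_adj he), card_singleton] at this
    omega
  choose k w hk hw using appears
  choose create hcreate hcreate' using fun e => exists_targetAfter_eq (hw e)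
  choose destroy hdestroy using fun e => exists_targetBefore_eq (h.2.2 _) (hw e)
  exact ⟨⟨create, destroy, fun e => (hcreate e).trans (hk e),
    fun e => hk e ▸ hcreate' e, fun e => (hdestroy e).trans (hk e)⟩⟩

namespace EdgeGates

variable (σ : EdgeGates G C)

lemma create_injective : Function.Injective σ.create := fun e f h =>
  Subtype.ext <| Sym2.toFinset_injective <| by
    rw [← σ.targetAfter_create, ← σ.targetAfter_create, h]

lemma destroy_injective : Function.Injective σ.destroy := fun e f h =>
  Subtype.ext <| Sym2.toFinset_injective <| by
    rw [← σ.targetBefore_destroy, ← σ.targetBefore_destroy, h]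

lemma targetBefore_injOn : Set.InjOn (targetBefore C) (Set.range σ.destroy) := by
  rintro _ ⟨e, rfl⟩ _ ⟨f, rfl⟩ h
  rw [σ.targetBefore_destroy, σ.targetBefore_destroy] at h
  rw [Subtype.ext (Sym2.toFinset_injective h)]

lemma exists_of_mem_range_inter {g : Fin C.length}
    (hg : g ∈ Set.range σ.create ∩ Set.range σ.destroy) :
    ∃ e e' : G.edgeSet, e ≠ e' ∧ targetBefore C g = e.1.toFinset ∧
      targetAfter C g = e'.1.toFinset := by
  obtain ⟨⟨e', rfl⟩, ⟨e, he⟩⟩ := hg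
  have hb : targetBefore C (σ.create e') = e.1.toFinset := he ▸ σ.targetBefore_destroy e
  refine ⟨e, e', ?_, hb, σ.targetAfter_create e'⟩
  rintro rfl
  exact σ.targetBefore_create_ne e hb

variable [Fintype G.edgeSet]

def reusedGates : Finset (Fin C.length) := univ.image σ.create ∩ univ.image σ.destroy

lemma mem_reusedGates {g : Fin C.length} :
    g ∈ σ.reusedGates ↔ g ∈ Set.range σ.create ∩ Set.range σ.destroy := by
  simp [reusedGates]

lemma card_reusedGates_le (hG : 5 ≤ G.girth) :
    #σ.reusedGates ≤ 2 * #(σ.reusedGates.image (controlTerm C)) := by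
  refine card_le_mul_card_image _ 2 fun t ht => ?_
  obtain ⟨g₁, hg₁, rfl⟩ := mem_image.1 ht
  obtain ⟨e₁, e₁', -, hb₁, ha₁⟩ := σ.exists_of_mem_range_inter (σ.mem_reusedGates.1 hg₁)
  set F := σ.reusedGates.filter (controlTerm C · = controlTerm C g₁)
  have hF : ∀ g ∈ F, g ∈ Set.range σ.create ∩ Set.range σ.destroy := fun g hg =>
    σ.mem_reusedGates.1 (mem_filter.1 hg).1
  -- A reused gate is determined by the edge it destroys, one of the two edges of `g₁`.
  calc #F = #(F.image (targetBefore C)) := (card_image_of_injOn fun g hg g' hg' =>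
          σ.targetBefore_injOn (hF g hg).2 (hF g' hg').2).symm
    _ ≤ #{targetBefore C g₁, targetAfter C g₁} := card_le_card ?_
    _ ≤ 2 := card_le_two
  intro s hs
  obtain ⟨g, hg, rfl⟩ := mem_image.1 hs
  obtain ⟨e, e', hee', hb, ha⟩ := σ.exists_of_mem_range_inter (hF g hg)
  have hc : e.1.toFinset ∆ e'.1.toFinset = e₁.1.toFinset ∆ e₁'.1.toFinset := by
    have := (mem_filter.1 hg).2
    rwa [controlTerm_eq, controlTerm_eq, ha, hb, ha₁, hb₁, symmDiff_comm,
      symmDiff_comm e₁'.1.toFinset] at this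
  rcases eq_or_eq_of_toFinset_symmDiff_eq hG e.2 e'.2 e₁.2 e₁'.2
    (Subtype.coe_injective.ne hee') hc with h | h
  · simp [hb, hb₁, h]
  · simp [hb, ha₁, h]

lemma exists_disjoint_card_image_controlTerm_le (hG : 5 ≤ G.girth) :
    ∃ S : Finset (Fin C.length), Disjoint (univ.image σ.create) S ∧
      #(σ.reusedGates.image (controlTerm C)) ≤ #S := by
  set T := σ.reusedGates.image (controlTerm C)
  -- `S` holds the gates writing a control term of a reused gate: they create no edge.
  refine ⟨univ.filter (targetAfter C · ∈ T), disjoint_left.2 ?_, ?_⟩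
  · rintro _ ha hS
    obtain ⟨f, -, rfl⟩ := mem_image.1 ha
    obtain ⟨g, hg, hgf⟩ := mem_image.1 (mem_filter.1 hS).2
    obtain ⟨e, e', -, hb, ha⟩ := σ.exists_of_mem_range_inter (σ.mem_reusedGates.1 hg)
    rw [controlTerm_eq, ha, hb, σ.targetAfter_create] at hgf
    exact toFinset_symmDiff_ne_toFinset hG e'.2 e.2 f.2 hgf
  · refine (card_le_card fun t ht => ?_).trans (card_image_le (f := targetAfter C))
    obtain ⟨g, hg, rfl⟩ := mem_image.1 ht
    obtain ⟨e, e', -, hb, ha⟩ := σ.exists_of_mem_range_inter (σ.mem_reusedGates.1 hg)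
    have hne : controlTerm C g ≠ {C[g].1} := by
      rw [controlTerm_eq, ha, hb]
      exact Sym2.toFinset_symmDiff_ne_singleton (G.not_isDiag_of_mem_edgeSet e'.2)
        (G.not_isDiag_of_mem_edgeSet e.2) _
    obtain ⟨a, ha, -⟩ := exists_targetAfter_eq hne
    exact mem_image.2 ⟨a, mem_filter.2 ⟨mem_univ _, ha ▸ ht⟩, ha⟩

end EdgeGates

lemma EdgeGates.finite_edgeSet (σ : EdgeGates G C) : G.edgeSet.Finite :=
  Set.finite_coe_iff.1 (Finite.of_injective _ σ.create_injective)

lemma EdgeGates.four_mul_card_edgeSet_le (σ : EdgeGates G C) [Fintype G.edgeSet]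
    (hG : 5 ≤ G.girth) :
    4 * Fintype.card G.edgeSet ≤ 3 * C.length := by
  obtain ⟨S, hPS, hS⟩ := σ.exists_disjoint_card_image_controlTerm_le hG
  have hP : #(univ.image σ.create) = Fintype.card G.edgeSet :=
    card_image_of_injective _ σ.create_injective
  have hD : #(univ.image σ.destroy) = Fintype.card G.edgeSet :=
    card_image_of_injective _ σ.destroy_injective
  have hPD := card_union_add_card_inter (univ.image σ.create) (univ.image σ.destroy)
  have hPD' := card_le_univ (univ.image σ.create ∪ univ.image σ.destroy)
  have hPS' := card_le_univ (univ.image σ.create ∪ S)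
  rw [card_union_of_disjoint hPS] at hPS'
  rw [Fintype.card_fin] at hPD' hPS'
  have := σ.card_reusedGates_le hG
  unfold EdgeGates.reusedGates at this hS
  -- creating or destroying gates: `2m - r ≤ N`; creating gates or `S`: `m + r / 2 ≤ N`
  omega

end Network

theorem stmt8_general {V : Type*} [DecidableEq V] (G : SimpleGraph V)
    (hgirth : 5 ≤ G.girth) (C : List (V × V)) (h : IsGPN G C) :
    7 * Nat.card G.edgeSet ≤ 6 * C.length := by
  obtain ⟨σ⟩ := h.nonempty_edgeGates
  have := σ.finite_edgeSet.fintype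
  have := σ.four_mul_card_edgeSet_le hgirth
  rw [Nat.card_eq_fintype_card]
  omega

/-- If `G` has no cycle of length three or four (girth at least five), then every
graphic parity network for `G` has size at least `7m/6`, i.e. `6 · size ≥ 7m`. -/
theorem stmt8 {V : Type*} [Fintype V] [DecidableEq V] (G : SimpleGraph V)
    (hgirth : 5 ≤ G.girth) (C : List (V × V)) (h : IsGPN G C) :
    7 * Nat.card G.edgeSet ≤ 6 * C.length :=
  stmt8_general G hgirth C h
end
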